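/- arXiv:1809.04628 — 7 statements merged into one kernel-verified Lean document; each statement's English description precedes it below -/
import Mathlib

section
/- Let p ≥ 2 be an integer and r ∈ {1,…,p−1}. Then for every n ∈ ℕ, the coefficient D_{p,r}(n) satisfies D_{p,r}(n) = ∏_{i=0}^{p−1} (−1)^{i·N_p(i,n)} · C(r,i)^{N_p(i,n)}, with the conventions C(a,b) = 0 for b > a and 0^0 = 1. -/
open PowerSeries Finset

/-- The number of digits equal to `i` in the base-`p` representation of `n`. -/
def Np (p i n : ℕ) : ℕ := (Nat.digits p n).count i

/-- `Dcoef p r n` is the coefficient of `x^n` in `∏_{i=0}^∞ (1 - x^{p^i})^r`.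
Since `p ≥ 2`, the factors with index `i > n` do not affect the coefficient of `x^n`,
so the product may be truncated at `i = n`. -/
noncomputable def Dcoef (p r n : ℕ) : ℤ :=
  PowerSeries.coeff (R := ℤ) n (∏ i ∈ Finset.range (n + 1), (1 - PowerSeries.X ^ p ^ i) ^ r)

/-- `Dp p n = D_{p,p-1}(n)`. -/
noncomputable def Dp (p n : ℕ) : ℤ := Dcoef p (p - 1) n

/-- `Acoef m k n` is the coefficient of `x^n` in `∏_{i=0}^∞ (1 - x^{m^i})^{-k}`,
the number of `k`-colored `m`-ary partitions of `n`.  Here `(1 - X^{m^i})⁻¹` is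
realized as `PowerSeries.invOfUnit (1 - X ^ m ^ i) 1`, and since `m ≥ 2` the factors
with index `i > n` do not affect the coefficient of `x^n`. -/
noncomputable def Acoef (m k n : ℕ) : ℤ :=
  PowerSeries.coeff (R := ℤ) n
    (∏ i ∈ Finset.range (n + 1),
      (PowerSeries.invOfUnit (1 - PowerSeries.X ^ m ^ i) 1) ^ k)

/-!
Each factor `(1 - X^{p^i})^r` is the `p^i`-fold expansion of `g = (1 - X)^r`, and `g` has
degree `r < p`. Multiplying a polynomial expanded by `p` with one of degree `< p` does not mix
coefficients: the coefficient of `X^(p q + d)` (with `d < p`) is the product of the coefficient of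
`X^q` in the expanded polynomial and that of `X^d` in the multiplier. Peeling off one factor per
base-`p` digit, the coefficient of `X^n` in `∏ (1 - X^{p^i})^r` is the product of the coefficients
`(-1)^d C(r, d)` of `g` over the digits `d` of `n`.
-/

namespace Polynomial

variable {R : Type*}

theorem coeff_one_sub_X_pow [CommRing R] (r k : ℕ) :
    ((1 - X : R[X]) ^ r).coeff k = (-1) ^ k * r.choose k := by
  induction r generalizing k with
  | zero => rcases k with _ | k <;> simp [coeff_one]
  | succ r ih =>
    rw [pow_succ, mul_sub, mul_one]
    rcases k with _ | k
    · simp [ih]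
    · rw [coeff_sub, coeff_mul_X, ih, ih, Nat.choose_succ_succ]
      push_cast
      ring

theorem natDegree_one_sub_X_pow_le [CommRing R] (r : ℕ) :
    ((1 - X : R[X]) ^ r).natDegree ≤ r := by
  compute_degree

variable [CommSemiring R]

theorem coeff_expand_mul_of_natDegree_lt {p : ℕ} (hp : 0 < p) (f : R[X]) {g : R[X]}
    (hg : g.natDegree < p) (n : ℕ) :
    (expand R p f * g).coeff n = f.coeff (n / p) * g.coeff (n % p) := by
  rw [coeff_mul, Finset.sum_eq_single (p * (n / p), n % p)]
  · rw [coeff_expand_mul' hp]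
  · rintro ⟨a, b⟩ hab hne
    rw [HasAntidiagonal.mem_antidiagonal] at hab
    by_cases hb : p ≤ b
    · rw [coeff_eq_zero_of_natDegree_lt (hg.trans_le hb), mul_zero]
    · rw [coeff_expand hp, if_neg, zero_mul]
      rintro ⟨c, rfl⟩
      apply hne
      have hmod : n % p = b := by rw [← hab, Nat.mul_add_mod, Nat.mod_eq_of_lt (not_le.1 hb)]
      have hdiv : n / p = c := by
        rw [← hab, Nat.mul_add_div hp, Nat.div_eq_of_lt (not_le.1 hb), add_zero]
      rw [hmod, hdiv]
  · exact fun h => absurd (HasAntidiagonal.mem_antidiagonal.2 (Nat.div_add_mod n p)) h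

theorem prod_range_succ_expand_pow (p : ℕ) (g : R[X]) (m : ℕ) :
    ∏ i ∈ range (m + 1), expand R (p ^ i) g =
      expand R p (∏ i ∈ range m, expand R (p ^ i) g) * g := by
  rw [prod_range_succ', pow_zero, expand_one, map_prod]
  simp_rw [← expand_mul, pow_succ']

theorem coeff_prod_expand_pow_eq_prod_digits {p : ℕ} (hp : 1 < p) {g : R[X]}
    (hg : g.natDegree < p) (hg0 : g.coeff 0 = 1) {m n : ℕ} (hn : n < p ^ m) :
    (∏ i ∈ range m, expand R (p ^ i) g).coeff n = ((Nat.digits p n).map g.coeff).prod := by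
  induction m generalizing n with
  | zero =>
    obtain rfl : n = 0 := by simpa using hn
    simp
  | succ m ih =>
    have hdiv : n / p < p ^ m := Nat.div_lt_of_lt_mul (by rwa [← pow_succ'])
    rw [prod_range_succ_expand_pow, coeff_expand_mul_of_natDegree_lt (by omega) _ hg,
      ih hdiv]
    rcases eq_or_ne n 0 with rfl | hn0
    · simp [hg0]
    · rw [Nat.digits_eq_cons_digits_div hp hn0, List.map_cons, List.prod_cons, mul_comm]

end Polynomial

theorem List.prod_map_eq_prod_range_pow_count {M : Type*} [CommMonoid M] {l : List ℕ} {p : ℕ}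
    (hl : ∀ i ∈ l, i < p) (f : ℕ → M) :
    (l.map f).prod = ∏ i ∈ Finset.range p, f i ^ l.count i := by
  rw [prod_list_map_count]
  refine prod_subset (fun i hi => mem_range.2 (hl i (List.mem_toFinset.1 hi))) fun i _ hi => ?_
  rw [List.count_eq_zero.2 (fun h => hi (List.mem_toFinset.2 h)), pow_zero]

theorem Dcoef_eq_coeff_prod_expand_pow (p r n : ℕ) :
    Dcoef p r n = (∏ i ∈ range (n + 1),
      Polynomial.expand ℤ (p ^ i) ((1 - Polynomial.X) ^ r)).coeff n := by
  rw [Dcoef, ← Polynomial.coeff_coe]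
  congr 1
  rw [← Polynomial.coeToPowerSeries.ringHom_apply, map_prod]
  simp

theorem stmt0_general (p r : ℕ) (hp : 2 ≤ p) (hr2 : r ≤ p - 1) (n : ℕ) :
    Dcoef p r n =
      ∏ i ∈ Finset.range p, (-1 : ℤ) ^ (i * Np p i n) * (r.choose i : ℤ) ^ Np p i n := by
  have hn : n < p ^ (n + 1) := (Nat.lt_pow_self hp).trans (Nat.pow_lt_pow_succ hp)
  have hdeg : ((1 - Polynomial.X : Polynomial ℤ) ^ r).natDegree < p :=
    (Polynomial.natDegree_one_sub_X_pow_le r).trans_lt (by omega)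
  have hcoeff0 : ((1 - Polynomial.X : Polynomial ℤ) ^ r).coeff 0 = 1 := by
    simp [Polynomial.coeff_one_sub_X_pow]
  rw [Dcoef_eq_coeff_prod_expand_pow,
    Polynomial.coeff_prod_expand_pow_eq_prod_digits hp hdeg hcoeff0 hn,
    List.prod_map_eq_prod_range_pow_count fun i hi => Nat.digits_lt_base hp hi]
  refine prod_congr rfl fun i _ => ?_
  rw [Polynomial.coeff_one_sub_X_pow, mul_pow, pow_mul, Np]

theorem stmt0 (p r : ℕ) (hp : 2 ≤ p) (hr1 : 1 ≤ r) (hr2 : r ≤ p - 1) (n : ℕ) :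
    Dcoef p r n =
      ∏ i ∈ Finset.range p, (-1 : ℤ) ^ (i * Np p i n) * (r.choose i : ℤ) ^ Np p i n :=
  stmt0_general p r hp hr2 n
end

section
/- Let p ≥ 2 be an integer and r ∈ {1,…,p−1}. Then for every j ∈ {0,…,p−1} and every n ∈ ℕ with n ≥ 1, one has D_{p,r}(pn + j) = (−1)^j · C(r,j) · D_{p,r}(n), with the convention C(r,j) = 0 for j > r. -/
/-!
The generating function `F(x) = ∏ (1 - x^{p^i})^r` satisfies `F(x) = (1 - x)^r F(x^p)`. Since
`(1 - x)^r` has degree `r < p`, the only way to write `pn + j` (with `j < p`) as `a + pb` with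
`a ≤ r` is `a = j`, `b = n`, so the coefficient of `x^{pn+j}` is `(-1)^j C(r,j) D(n)`.
-/

open PowerSeries Finset

namespace PowerSeries

variable {R : Type*} [CommRing R]

theorem coeff_one_sub_X_pow (r j : ℕ) :
    coeff j ((1 - X : R⟦X⟧) ^ r) = (-1) ^ j * r.choose j := by
  have h : (1 - X : R⟦X⟧) ^ r = rescale (-1) ((1 + X) ^ r) := by
    simp [sub_eq_add_neg]
  rw [h, coeff_rescale, ← binomialSeries_nat (R := ℤ), binomialSeries_coeff,
    Ring.choose_natCast, zsmul_one, Int.cast_natCast]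

theorem coeff_mul_pow_one_sub_X_pow_of_lt (f : R⟦X⟧) (r : ℕ) {k n : ℕ} (hn : n < k) :
    coeff n (f * (1 - X ^ k) ^ r) = coeff n f := by
  have hdvd : X ^ k ∣ (1 - X ^ k : R⟦X⟧) ^ r - 1 := by
    have := sub_dvd_pow_sub_pow (1 - X ^ k : R⟦X⟧) 1 r
    rwa [one_pow, sub_sub_cancel_left, neg_dvd] at this
  rw [show f * (1 - X ^ k) ^ r = f + f * ((1 - X ^ k) ^ r - 1) by ring, map_add,
    X_pow_dvd_iff.mp (dvd_mul_of_dvd_right hdvd f) n hn, add_zero]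

theorem coeff_mul_expand_of_lt {p : ℕ} (hp : p ≠ 0) {f : R⟦X⟧}
    (hf : ∀ a, p ≤ a → coeff a f = 0) (g : R⟦X⟧) {j : ℕ} (hj : j < p) (n : ℕ) :
    coeff (p * n + j) (f * expand p hp g) = coeff j f * coeff n g := by
  rw [coeff_mul, sum_eq_single (j, p * n), coeff_expand_mul]
  · rintro ⟨a, b⟩ hab hne
    rw [HasAntidiagonal.mem_antidiagonal] at hab
    rcases le_or_gt p a with ha | ha
    · rw [hf a ha, zero_mul]
    by_cases hb : p ∣ b
    · obtain ⟨t, rfl⟩ := hb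
      have haj : a = j := by
        have := congrArg (· % p) hab
        simpa [Nat.add_mul_mod_self_left, Nat.mod_eq_of_lt ha, Nat.mod_eq_of_lt hj, add_comm]
          using this
      subst haj
      have htn : t = n :=
        Nat.eq_of_mul_eq_mul_left (Nat.pos_of_ne_zero hp) (by simpa [add_comm] using hab)
      exact absurd (by rw [htn]) hne
    · rw [coeff_expand_of_not_dvd p hp g hb, mul_zero]
  · intro h
    exact absurd (HasAntidiagonal.mem_antidiagonal.mpr (add_comm _ _)) h

end PowerSeries

noncomputable def partialProd (R : Type*) [CommRing R] (p r N : ℕ) : R⟦X⟧ :=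
  ∏ i ∈ range N, (1 - X ^ p ^ i) ^ r

section partialProd

variable {R : Type*} [CommRing R] {p : ℕ} (r : ℕ)

theorem partialProd_succ' (hp : p ≠ 0) (N : ℕ) :
    partialProd R p r (N + 1) = (1 - X) ^ r * expand p hp (partialProd R p r N) := by
  simp only [partialProd, prod_range_succ', map_prod, map_pow, map_sub, map_one, expand_X,
    ← pow_mul, pow_succ', pow_zero, pow_one, mul_comm]

theorem coeff_partialProd_succ {n N : ℕ} (hn : n < p ^ N) :
    coeff n (partialProd R p r (N + 1)) = coeff n (partialProd R p r N) := by
  rw [partialProd, prod_range_succ, coeff_mul_pow_one_sub_X_pow_of_lt _ _ hn, partialProd]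

theorem coeff_partialProd_eq_Dcoef (hp : 2 ≤ p) {n N : ℕ} (hN : n < N) :
    coeff n (partialProd ℤ p r N) = Dcoef p r n := by
  induction N, hN using Nat.le_induction with
  | base => rfl
  | succ N hnN ih =>
    rw [coeff_partialProd_succ r ((Nat.lt_of_succ_le hnN).trans (N.lt_pow_self hp)), ih]

end partialProd

theorem stmt1_general (p r : ℕ) (hp : 2 ≤ p) (hr2 : r ≤ p - 1)
    (j n : ℕ) (hj : j ≤ p - 1) :
    Dcoef p r (p * n + j) = (-1 : ℤ) ^ j * (r.choose j : ℤ) * Dcoef p r n := by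
  have hp0 : p ≠ 0 := by omega
  have hvanish : ∀ a, p ≤ a → coeff a ((1 - X : ℤ⟦X⟧) ^ r) = 0 := fun a ha => by
    rw [coeff_one_sub_X_pow, Nat.choose_eq_zero_of_lt (by omega), Nat.cast_zero, mul_zero]
  have hn : n < p * n + j + 1 := by nlinarith
  rw [← coeff_partialProd_eq_Dcoef r hp (N := p * n + j + 1 + 1) (by omega),
    partialProd_succ' r hp0, coeff_mul_expand_of_lt hp0 hvanish _ (by omega), coeff_one_sub_X_pow,
    coeff_partialProd_eq_Dcoef r hp hn]

theorem stmt1 (p r : ℕ) (hp : 2 ≤ p) (hr1 : 1 ≤ r) (hr2 : r ≤ p - 1)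
    (j n : ℕ) (hj : j ≤ p - 1) (hn : 1 ≤ n) :
    Dcoef p r (p * n + j) = (-1 : ℤ) ^ j * (r.choose j : ℤ) * Dcoef p r n :=
  stmt1_general p r hp hr2 j n hj
end

section
/- Let p ≥ 3 be a prime and k ∈ ℕ₊ with (p−1) | k. Then the congruence of formal power series F_p(x)^k ≡ (1 − x)^{k/(p−1)} (mod p^{ν_p(k)+1}) holds, i.e., every coefficient of F_p(x)^k − (1 − x)^{k/(p−1)} is divisible by p^{ν_p(k)+1}. -/
open PowerSeries Finset

/-!
Write `G = ∏_{i ≤ n} (1 - X^{p^i})`, so that `F_p^k ≡ G^{-k}` up to degree `n`. Modulo `p`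
the Frobenius telescopes `G^{p-1} (1 - X)` to `1 - X^{p^{n+1}}`, hence `Q = G^{p-1} (1 - X) ≡ 1`
modulo `p` and `X^{p^{n+1}}`. Since `p^{ν_p(k)}` divides `s = k/(p-1)`, lifting the exponent
gives `Q^s = G^k (1 - X)^s ≡ 1` modulo `p^{ν_p(k)+1}` and `X^{p^{n+1}}`; multiplying by `G^{-k}`
gives the claim.
-/

theorem prime_dvd_one_sub_pow_sub {R : Type*} [CommRing R] {p : ℕ} (hp : p.Prime) (y : R) :
    (p : R) ∣ (1 - y) ^ p - (1 - y ^ p) := by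
  obtain ⟨r, hr⟩ := exists_add_pow_prime_eq hp (1 - y) y
  rw [sub_add_cancel, one_pow] at hr
  exact ⟨-((1 - y) * y * r), by linear_combination -hr⟩

theorem prime_dvd_prod_one_sub_pow_pow_mul_one_sub_sub {R : Type*} [CommRing R] {p : ℕ}
    (hp : p.Prime) (y : R) (n : ℕ) :
    (p : R) ∣ (∏ i ∈ range n, (1 - y ^ p ^ i)) ^ (p - 1) * (1 - y) - (1 - y ^ p ^ n) := by
  induction n with
  | zero => simp
  | succ n ih =>
    set z := y ^ p ^ n
    obtain ⟨c, hc⟩ := ih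
    obtain ⟨d, hd⟩ := prime_dvd_one_sub_pow_sub hp z
    have hz : y ^ p ^ (n + 1) = z ^ p := by rw [pow_succ, pow_mul]
    rw [← pow_sub_one_mul hp.ne_zero] at hd
    refine ⟨(1 - z) ^ (p - 1) * c + d, ?_⟩
    rw [prod_range_succ, mul_pow, hz]
    linear_combination (1 - z) ^ (p - 1) * hc + hd

theorem pow_succ_dvd_pow_sub_one_of_dvd_sub_one {R : Type*} [CommRing R] {p v s : ℕ} {x : R}
    (hx : (p : R) ∣ x - 1) (hs : p ^ v ∣ s) : (p : R) ^ (v + 1) ∣ x ^ s - 1 := by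
  obtain ⟨t, rfl⟩ := hs
  have hlift := dvd_sub_pow_of_dvd_sub hx v
  rw [one_pow] at hlift
  simpa [pow_mul] using hlift.trans (sub_dvd_pow_sub_pow (x ^ p ^ v) 1 t)

theorem pow_padicValNat_dvd_div_sub_one {p k : ℕ} (hp : p.Prime) (hdvd : p - 1 ∣ k) :
    p ^ padicValNat p k ∣ k / (p - 1) := by
  have hcop : (p ^ padicValNat p k).Coprime (p - 1) :=
    ((Nat.coprime_self_sub_right hp.pos).mpr (Nat.coprime_one_right p)).pow_left _
  refine hcop.dvd_of_dvd_mul_left ?_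
  rw [Nat.mul_div_cancel' hdvd]
  exact pow_padicValNat_dvd

namespace PowerSeries

theorem invOfUnit_one_sub_X_pow_mul {R : Type*} [CommRing R] {d : ℕ} (hd : d ≠ 0) :
    invOfUnit (1 - X ^ d : R⟦X⟧) 1 * (1 - X ^ d) = 1 :=
  invOfUnit_mul _ _ (by simp [zero_pow hd])

theorem natCast_dvd_coeff_of_dvd_mk {R : Type*} [CommRing R] {c N n : ℕ} (hn : n < N)
    {f : R⟦X⟧}
    (h : (c : R⟦X⟧ ⧸ Ideal.span {(X : R⟦X⟧) ^ N}) ∣ Ideal.Quotient.mk _ f) :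
    (c : R) ∣ coeff n f := by
  obtain ⟨g', hg'⟩ := h
  obtain ⟨g, rfl⟩ := Ideal.Quotient.mk_surjective g'
  rw [← map_natCast (Ideal.Quotient.mk _), ← map_mul, Ideal.Quotient.eq,
    Ideal.mem_span_singleton] at hg'
  have hcoeff := X_pow_dvd_iff.mp hg' n hn
  rw [map_sub, sub_eq_zero, ← map_natCast C, coeff_C_mul] at hcoeff
  exact ⟨_, hcoeff⟩

end PowerSeries

theorem stmt2_general (p k : ℕ) (hp : p.Prime)
    (hdvd : (p - 1) ∣ k) (n : ℕ) :
    (p : ℤ) ^ (padicValNat p k + 1) ∣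
      Acoef p k n -
        PowerSeries.coeff (R := ℤ) n ((1 - PowerSeries.X : PowerSeries ℤ) ^ (k / (p - 1))) := by
  set s := k / (p - 1)
  set J := Ideal.span {(X : ℤ⟦X⟧) ^ p ^ (n + 1)}
  set π := Ideal.Quotient.mk J
  set G := ∏ i ∈ range (n + 1), (1 - X ^ p ^ i : ℤ⟦X⟧)
  set P := ∏ i ∈ range (n + 1), invOfUnit (1 - X ^ p ^ i : ℤ⟦X⟧) 1 ^ k
  have hPG : P * G ^ k = 1 := by
    rw [← prod_pow, ← prod_mul_distrib]
    refine prod_eq_one fun i _ => ?_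
    rw [← mul_pow, invOfUnit_one_sub_X_pow_mul (pow_ne_zero i hp.ne_zero), one_pow]
  have hXN : π X ^ p ^ (n + 1) = 0 := by
    rw [← map_pow, Ideal.Quotient.eq_zero_iff_mem]
    exact Ideal.mem_span_singleton_self _
  have hQ : (p : ℤ⟦X⟧ ⧸ J) ∣ π (G ^ (p - 1) * (1 - X)) - 1 := by
    simpa [G, π, map_prod, hXN] using
      prime_dvd_prod_one_sub_pow_pow_mul_one_sub_sub hp (π X) (n + 1)
  have hQs :=
    pow_succ_dvd_pow_sub_one_of_dvd_sub_one hQ (pow_padicValNat_dvd_div_sub_one hp hdvd)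
  rw [← map_pow, mul_pow, ← pow_mul, Nat.mul_div_cancel' hdvd] at hQs
  have hdiff : π (P - (1 - X) ^ s) = -π P * (π (G ^ k * (1 - X) ^ s) - 1) := by
    have hcancel : π P * π (G ^ k * (1 - X) ^ s) = π ((1 - X) ^ s) := by
      rw [← map_mul, ← mul_assoc, hPG, one_mul]
    rw [map_sub]
    linear_combination hcancel
  have hdvd_mk :
      ((p ^ (padicValNat p k + 1) : ℕ) : ℤ⟦X⟧ ⧸ J) ∣ π (P - (1 - X) ^ s) := by
    rw [hdiff, Nat.cast_pow]
    exact hQs.mul_left _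
  have hcoeff := natCast_dvd_coeff_of_dvd_mk
    ((Nat.lt_succ_self n).trans (Nat.lt_pow_self hp.one_lt)) hdvd_mk
  rw [map_sub, Nat.cast_pow] at hcoeff
  exact hcoeff

theorem stmt2 (p k : ℕ) (hp : p.Prime) (hp3 : 3 ≤ p) (hk : 1 ≤ k)
    (hdvd : (p - 1) ∣ k) (n : ℕ) :
    (p : ℤ) ^ (padicValNat p k + 1) ∣
      Acoef p k n -
        PowerSeries.coeff (R := ℤ) n ((1 - PowerSeries.X : PowerSeries ℤ) ^ (k / (p - 1))) :=
  stmt2_general p k hp hdvd n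
end

section
/- Let p ≥ 3 be a prime, u ∈ {1,…,p−1} and s ∈ ℕ₊. Then for every integer n > u·p^s, ν_p( A_{p,(p−1)(u·p^s−1)}(n) ) ≥ 1, i.e., p divides A_{p,(p−1)(u·p^s−1)}(n). -/
open PowerSeries Finset

/-
Modulo p, Frobenius gives (1 - x^{p^i})^p = 1 - x^{p^{i+1}}, so the product
(1 - x) ∏_{i<N} (1 - x^{p^i})^{p-1} telescopes to 1 - x^{p^N}.  Hence the generating function
∏_i (1 - x^{p^i})^{-(p-1)m} of A_{p,(p-1)m} is congruent to ((1 - x) / (1 - x^{p^N}))^m, which agrees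
with the polynomial (1 - x)^m in all degrees below p^N.  So A_{p,(p-1)m}(n) ≡ (-1)^n C(m, n) (mod p),
and this vanishes for n > m = u p^s - 1.
-/

namespace PowerSeries

variable {R : Type*} [CommRing R]

instance charP (p : ℕ) [CharP R p] : CharP R⟦X⟧ p :=
  charP_of_injective_ringHom C_injective p

theorem map_invOfUnit {S : Type*} [CommRing S] (f : R →+* S) (φ : R⟦X⟧) (u : Rˣ)
    (h : constantCoeff φ = u) :
    map f (invOfUnit φ u) = invOfUnit (map f φ) (Units.map f.toMonoidHom u) := by
  have h' : constantCoeff (map f φ) = Units.map f.toMonoidHom u := by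
    rw [← coeff_zero_eq_constantCoeff_apply, coeff_map, coeff_zero_eq_constantCoeff_apply, h]
    rfl
  refine left_inv_eq_right_inv (a := map f φ) (invOfUnit_mul _ _ h') ?_ |>.symm
  rw [← map_mul, mul_invOfUnit _ _ h, map_one]

theorem coeff_mul_one_sub_X_pow_pow {n q : ℕ} (hnq : n < q) (φ : R⟦X⟧) (m : ℕ) :
    coeff n (φ * (1 - X ^ q) ^ m) = coeff n φ := by
  have hdvd : (X : R⟦X⟧) ^ q ∣ (1 - X ^ q) ^ m - 1 := by
    have := sub_dvd_pow_sub_pow (1 - X ^ q : R⟦X⟧) 1 m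
    rwa [sub_sub_cancel_left, neg_dvd, one_pow] at this
  have := X_pow_dvd_iff.mp (hdvd.mul_left φ) n hnq
  rwa [mul_sub, mul_one, map_sub, sub_eq_zero] at this

theorem coeff_one_sub_X_pow_of_lt {m n : ℕ} (hmn : m < n) :
    coeff n ((1 - X : R⟦X⟧) ^ m) = 0 := by
  have hdeg : ((1 - Polynomial.X : Polynomial R) ^ m).natDegree < n :=
    (Polynomial.natDegree_pow_le_of_le m (Polynomial.natDegree_sub_le_of_le
      Polynomial.natDegree_one.le Polynomial.natDegree_X_le)).trans_lt (by simpa using hmn)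
  have hcoe : ((1 - Polynomial.X : Polynomial R) ^ m : Polynomial R) = (1 - X : R⟦X⟧) ^ m := by
    rw [Polynomial.coe_pow, Polynomial.coe_sub, Polynomial.coe_one, Polynomial.coe_X]
  rw [← hcoe, Polynomial.coeff_coe, Polynomial.coeff_eq_zero_of_natDegree_lt hdeg]

variable (p : ℕ) [Fact p.Prime] [CharP R p]

theorem prod_one_sub_X_pow_prime_pow_pow_pred_mul_one_sub_X (N : ℕ) :
    (∏ i ∈ range N, (1 - X ^ p ^ i : R⟦X⟧) ^ (p - 1)) * (1 - X) = 1 - X ^ p ^ N := by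
  induction N with
  | zero => simp
  | succ N ih =>
    have hp := (Fact.out : p.Prime).one_lt.le
    calc (∏ i ∈ range (N + 1), (1 - X ^ p ^ i : R⟦X⟧) ^ (p - 1)) * (1 - X)
        = (1 - X ^ p ^ N) ^ (p - 1) * (1 - X ^ p ^ N) := by
          rw [prod_range_succ, mul_right_comm, ih, mul_comm]
      _ = 1 - X ^ p ^ (N + 1) := by
          rw [← pow_succ, Nat.sub_add_cancel hp, sub_pow_char, one_pow, ← pow_mul, pow_succ]

theorem coeff_prod_invOfUnit_pow_pred_mul {n N : ℕ} (hn : n < p ^ N) (m : ℕ) :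
    coeff n (∏ i ∈ range N, invOfUnit (1 - X ^ p ^ i : R⟦X⟧) 1 ^ ((p - 1) * m)) =
      coeff n ((1 - X : R⟦X⟧) ^ m) := by
  set P := ∏ i ∈ range N, invOfUnit (1 - X ^ p ^ i : R⟦X⟧) 1 ^ ((p - 1) * m)
  set Q := ∏ i ∈ range N, (1 - X ^ p ^ i : R⟦X⟧) ^ ((p - 1) * m)
  have hQP : Q * P = 1 := by
    rw [← prod_mul_distrib]
    refine prod_eq_one fun i _ => ?_
    have hcc : constantCoeff (1 - X ^ p ^ i : R⟦X⟧) = ((1 : Rˣ) : R) := by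
      simp [zero_pow (pow_ne_zero i (Fact.out : p.Prime).ne_zero)]
    rw [← mul_pow, mul_invOfUnit _ _ hcc, one_pow]
  have hQ : Q * (1 - X) ^ m = (1 - X ^ p ^ N) ^ m := by
    simp only [Q, pow_mul]
    rw [prod_pow, ← mul_pow, prod_one_sub_X_pow_prime_pow_pow_pred_mul_one_sub_X]
  calc coeff n P = coeff n (P * (1 - X ^ p ^ N) ^ m) := (coeff_mul_one_sub_X_pow_pow hn P m).symm
    _ = coeff n ((Q * P) * (1 - X) ^ m) := by rw [← hQ, ← mul_assoc, mul_comm P Q]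
    _ = coeff n ((1 - X) ^ m) := by rw [hQP, one_mul]

end PowerSeries

theorem intCast_Acoef (R : Type*) [CommRing R] {m : ℕ} (hm : m ≠ 0) (k n : ℕ) :
    (Acoef m k n : R) =
      coeff n (∏ i ∈ range (n + 1), invOfUnit (1 - X ^ m ^ i : R⟦X⟧) 1 ^ k) := by
  have hcc (i : ℕ) : constantCoeff (1 - X ^ m ^ i : ℤ⟦X⟧) = ((1 : ℤˣ) : ℤ) := by
    simp [zero_pow (pow_ne_zero i hm)]
  rw [Acoef, ← eq_intCast (Int.castRingHom R), ← coeff_map, map_prod]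
  simp only [map_pow, map_invOfUnit _ _ _ (hcc _), map_sub, map_one, map_X]

theorem intCast_Acoef_pred_mul_eq_coeff_one_sub_X_pow (p : ℕ) [Fact p.Prime] (m n : ℕ) :
    (Acoef p ((p - 1) * m) n : ZMod p) = coeff n ((1 - X : (ZMod p)⟦X⟧) ^ m) := by
  have hp := (Fact.out : p.Prime)
  rw [intCast_Acoef _ hp.ne_zero, PowerSeries.coeff_prod_invOfUnit_pow_pred_mul p
    ((Nat.lt_pow_self hp.one_lt).trans (Nat.pow_lt_pow_right hp.one_lt n.lt_succ_self))]

theorem stmt8_general (p u s : ℕ) (hp : p.Prime) (n : ℕ) (hn : u * p ^ s < n) :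
    (p : ℤ) ∣ Acoef p ((p - 1) * (u * p ^ s - 1)) n := by
  have : Fact p.Prime := ⟨hp⟩
  rw [← ZMod.intCast_zmod_eq_zero_iff_dvd, intCast_Acoef_pred_mul_eq_coeff_one_sub_X_pow]
  exact coeff_one_sub_X_pow_of_lt (by omega)

theorem stmt8 (p u s : ℕ) (hp : p.Prime) (hp3 : 3 ≤ p) (hu1 : 1 ≤ u) (hu2 : u ≤ p - 1)
    (hs : 1 ≤ s) (n : ℕ) (hn : u * p ^ s < n) :
    (p : ℤ) ∣ Acoef p ((p - 1) * (u * p ^ s - 1)) n :=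
  stmt8_general p u s hp n hn
end

section
/- Let p ≥ 3 be a prime and s ∈ ℕ₊. Then for every integer n > p^s, ν_p( A_{p,(p−1)(p^s−1)}(n) ) = 1; i.e., A_{p,(p−1)(p^s−1)}(n) is divisible by p but not by p². -/
open PowerSeries Finset

/-!
Work in `R⟦X⟧` with `p ^ 2 = 0` in `R`, and let `H = ∏_{i ≤ n} (1 - X ^ p ^ i)`, so that the
series of `A_{p,k}` with `k = (p - 1)(p ^ s - 1)` is `H ^ (-k)`. By the binomial theorem,
`(1 - X ^ q) ^ p = (1 - X ^ (q p)) (1 + p V(X ^ q) / (1 - X ^ (q p)))` with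
`V(Y) = ∑_{0<j<p} (-1) ^ j C(p, j) / p * Y ^ j`; taking the product over `q = p ^ i` and
telescoping gives `(1 - X) H ^ (p - 1) = (1 - X ^ p ^ (n + 1)) (1 + p U)`, where the `m`-th
coefficient of `U` is `c_d = (-1) ^ d C(p, d) / p` for `d` the lowest nonzero base-`p` digit
of `m`. As `(1 + p U) ^ p ^ s = 1` and `p (1 - X) ^ (p ^ s - 1) = p (1 + X + ⋯ + X ^ (p ^ s - 1))`,
this yields `A_{p,k}(n) ≡ p ∑_{n - p ^ s < m ≤ n} c_{d(m)} (mod p ^ 2)`. Modulo `p` the digit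
weights sum to zero over every full period (because `∑_{0<j<p} c_j = 0`), so the window sum
reduces to `c_{d(⌊n / p ^ s⌋)}`, and `c_d ≢ 0 (mod p)` since `p ∤ C(p - 1, d - 1) = d C(p, d) / p`.
-/

namespace ColoredPartition

-- The coefficient of `Y ^ k` in `((1 - Y) ^ p - 1 + Y ^ p) / p` for odd `p`.
def reducedChoose (p k : ℕ) : ℤ := (-1) ^ k * (p.choose k / p : ℕ)

section ReducedChoose

variable {p : ℕ}

lemma reducedChoose_zero (hp : 1 < p) : reducedChoose p 0 = 0 := by
  simp [reducedChoose, Nat.div_eq_of_lt hp]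

lemma sum_range_reducedChoose (hp : p.Prime) (hodd : Odd p) :
    ∑ k ∈ range p, reducedChoose p k = 0 := by
  have h := add_pow_prime_eq' hp (-1 : ℤ) 1
  simp only [neg_add_cancel, zero_pow hp.ne_zero, hodd.neg_one_pow, one_pow, mul_one] at h
  rw [range_eq_Ico, ← add_sum_erase _ _ (left_mem_Ico.2 hp.pos), Ico_erase_left,
    reducedChoose_zero hp.one_lt, zero_add]
  simpa [reducedChoose, hp.ne_zero] using h.symm

lemma not_dvd_choose_div (hp : p.Prime) {d : ℕ} (hd0 : 0 < d) (hdp : d < p) :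
    ¬ p ∣ p.choose d / p := by
  intro h
  have hchoose : (p - 1).choose (d - 1) = p.choose d / p * d := by
    have := Nat.add_one_mul_choose_eq (p - 1) (d - 1)
    rw [Nat.sub_add_cancel hp.one_le, Nat.sub_add_cancel hd0] at this
    rw [← Nat.mul_div_cancel_left ((p - 1).choose (d - 1)) hp.pos, this,
      Nat.div_mul_right_comm (hp.dvd_choose_self hd0.ne' hdp)]
  have hfact := Nat.choose_mul_factorial_mul_factorial (by omega : d - 1 ≤ p - 1)
  have : p ∣ (p - 1).factorial := by
    rw [← hfact, hchoose]
    exact ((h.mul_right d).mul_right _).mul_right _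
  exact absurd (hp.dvd_factorial.mp this) (by omega)

lemma reducedChoose_ne_zero (hp : p.Prime) {d : ℕ} (hd0 : 0 < d) (hdp : d < p) :
    (reducedChoose p d : ZMod p) ≠ 0 := by
  rw [ne_eq, ZMod.intCast_zmod_eq_zero_iff_dvd, reducedChoose, (isUnit_neg_one.pow d).dvd_mul_left,
    Int.natCast_dvd_natCast]
  exact not_dvd_choose_div hp hd0 hdp

end ReducedChoose

-- The value at `m = 0` is `0`.
def lowestNonzeroDigit (p m : ℕ) : ℕ := ordCompl[p] m % p

section LowestNonzeroDigit

variable {p : ℕ}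

lemma lowestNonzeroDigit_pow_mul (hp : p.Prime) (k a : ℕ) :
    lowestNonzeroDigit p (p ^ k * a) = lowestNonzeroDigit p a := by
  rw [lowestNonzeroDigit, Nat.ordCompl_self_pow_mul a k hp, lowestNonzeroDigit]

lemma lowestNonzeroDigit_pow_mul_add (hp : p.Prime) {k a b : ℕ} (hb : 0 < b) (hbk : b < p ^ k) :
    lowestNonzeroDigit p (p ^ k * a + b) = lowestNonzeroDigit p b := by
  have hv : b.factorization p < k :=
    (Nat.pow_lt_pow_iff_right hp.one_lt).mp ((Nat.ordProj_le p hb.ne').trans_lt hbk)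
  obtain ⟨j, hj⟩ := Nat.exists_eq_add_of_lt hv
  have hsplit : p ^ k * a + b = p ^ b.factorization p * (p * (p ^ j * a) + ordCompl[p] b) := by
    rw [mul_add, Nat.ordProj_mul_ordCompl_eq_self, hj, pow_add, pow_add]
    ring
  have hndvd : ¬ p ∣ p * (p ^ j * a) + ordCompl[p] b :=
    (Nat.dvd_add_right (dvd_mul_right _ _)).not.mpr (Nat.not_dvd_ordCompl hp hb.ne')
  rw [hsplit, lowestNonzeroDigit, Nat.ordCompl_pow_mul_of_not_dvd _ hp hndvd, Nat.mul_add_mod,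
    lowestNonzeroDigit]

lemma lowestNonzeroDigit_of_lt (hp : p.Prime) {m : ℕ} (hm : m < p) :
    lowestNonzeroDigit p m = m := by
  have hself : ordCompl[p] m = m := (Nat.ordCompl_eq_self_iff_zero_or_not_dvd m hp).mpr <|
    (eq_or_ne m 0).imp_right fun h0 => Nat.not_dvd_of_pos_of_lt (Nat.pos_of_ne_zero h0) hm
  rw [lowestNonzeroDigit, hself, Nat.mod_eq_of_lt hm]

lemma lowestNonzeroDigit_pos (hp : p.Prime) {m : ℕ} (hm : m ≠ 0) : 0 < lowestNonzeroDigit p m :=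
  Nat.pos_of_ne_zero fun h => Nat.not_dvd_ordCompl hp hm (Nat.dvd_of_mod_eq_zero h)

lemma lowestNonzeroDigit_lt (hp : p.Prime) (m : ℕ) : lowestNonzeroDigit p m < p :=
  Nat.mod_lt _ hp.pos

lemma lowestNonzeroDigit_eq_ite (hp : p.Prime) (k m : ℕ) :
    lowestNonzeroDigit p m = if p ^ k ∣ m then lowestNonzeroDigit p (m / p ^ k)
      else lowestNonzeroDigit p (m % p ^ k) := by
  split_ifs with h
  · conv_lhs => rw [← Nat.mul_div_cancel' h]
    exact lowestNonzeroDigit_pow_mul hp k _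
  · conv_lhs => rw [← Nat.div_add_mod m (p ^ k)]
    exact lowestNonzeroDigit_pow_mul_add hp (Nat.pos_of_ne_zero (mt Nat.dvd_of_mod_eq_zero h))
      (Nat.mod_lt _ (pow_pos hp.pos k))

end LowestNonzeroDigit

section PeriodicSums

variable {M : Type*} [AddCommMonoid M]

lemma sum_range_mul_eq_sum_sum_Ico (f : ℕ → M) (k N : ℕ) :
    ∑ m ∈ range (k * N), f m = ∑ i ∈ range k, ∑ m ∈ Ico (i * N) (i * N + N), f m := by
  induction k with
  | zero => simp
  | succ k ih =>
    rw [sum_range_succ, ← ih, sum_range_add_sum_Ico _ (Nat.le_add_right _ _), add_one_mul]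

lemma sum_Ico_mod (f : ℕ → M) (a N : ℕ) :
    ∑ m ∈ Ico a (a + N), f (m % N) = ∑ b ∈ range N, f b := by
  calc ∑ m ∈ Ico a (a + N), f (m % N)
      = (((Multiset.Ico a (a + N)).map (· % N)).map f).sum := by rw [Multiset.map_map]; rfl
    _ = ∑ b ∈ range N, f b := by rw [Nat.multiset_Ico_map_mod]; rfl

lemma sum_Ico_of_eq_ite {w : ℕ → M} {N : ℕ} (hN : 0 < N) (hw0 : w 0 = 0)
    (hw : ∀ m, w m = if N ∣ m then w (m / N) else w (m % N)) (a : ℕ) :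
    ∑ m ∈ Ico a (a + N), w m = ∑ b ∈ range N, w b + w ((a + N - 1) / N) := by
  have hsplit : ∀ m, w m = w (m % N) + if N ∣ m then w (m / N) else 0 := by
    intro m
    rw [hw m]
    split_ifs with h
    · rw [Nat.mod_eq_zero_of_dvd h, hw0, zero_add]
    · rw [add_zero]
  obtain ⟨c, hc⟩ : ∃ c, c = a + N - 1 := ⟨_, rfl⟩
  have hq : N * (c / N) + c % N = c := Nat.div_add_mod c N
  have hr : c % N < N := Nat.mod_lt c hN
  -- the window contains exactly one multiple of `N`, namely `N * (c / N)`
  have hmem : N * (c / N) ∈ Ico a (a + N) := mem_Ico.mpr ⟨by omega, by omega⟩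
  rw [← hc, sum_congr rfl fun m _ => hsplit m, sum_add_distrib, sum_Ico_mod,
    sum_eq_single_of_mem _ hmem, if_pos (dvd_mul_right N _), Nat.mul_div_cancel_left _ hN]
  rintro m hm hne
  refine if_neg ?_
  rintro ⟨k, rfl⟩
  rw [mem_Ico] at hm
  have hk : c / N = k :=
    Nat.div_eq_of_lt_le (by rw [mul_comm]; omega) (by rw [add_one_mul, mul_comm]; omega)
  exact hne (by rw [hk])

end PeriodicSums

section DigitSums

variable {p : ℕ}

lemma sum_range_ite_reducedChoose (hp : p.Prime) {t m : ℕ} (hm : 0 < m) (hmt : m < p ^ t) :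
    ∑ i ∈ range t, (if p ^ i ∣ m then reducedChoose p (m / p ^ i % p) else 0)
      = reducedChoose p (lowestNonzeroDigit p m) := by
  have hv : m.factorization p < t :=
    (Nat.pow_lt_pow_iff_right hp.one_lt).mp ((Nat.ordProj_le p hm.ne').trans_lt hmt)
  rw [sum_eq_single_of_mem _ (mem_range.mpr hv), if_pos (Nat.ordProj_dvd m p)]
  · rfl
  intro i _ hi
  rcases hi.lt_or_gt with hlt | hgt
  · obtain ⟨c, hc⟩ := (pow_dvd_pow p hlt).trans (Nat.ordProj_dvd m p)
    rw [hc, pow_succ, mul_assoc, Nat.mul_div_cancel_left _ (pow_pos hp.pos i), Nat.mul_mod_right,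
      reducedChoose_zero hp.one_lt, ite_self]
  · exact if_neg ((hp.pow_dvd_iff_le_factorization hm.ne').not.mpr hgt.not_ge)

lemma sum_Ico_reducedChoose_lowestNonzeroDigit (hp : p.Prime) (s a : ℕ) :
    ∑ m ∈ Ico a (a + p ^ s), (reducedChoose p (lowestNonzeroDigit p m) : ZMod p)
      = ∑ m ∈ range (p ^ s), (reducedChoose p (lowestNonzeroDigit p m) : ZMod p)
        + reducedChoose p (lowestNonzeroDigit p ((a + p ^ s - 1) / p ^ s)) := by
  refine sum_Ico_of_eq_ite (pow_pos hp.pos s) ?_ (fun m => ?_) a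
  · rw [lowestNonzeroDigit_of_lt hp hp.pos, reducedChoose_zero hp.one_lt, Int.cast_zero]
  · rw [lowestNonzeroDigit_eq_ite hp s m]
    split_ifs <;> rfl

lemma sum_range_pow_reducedChoose_lowestNonzeroDigit (hp : p.Prime) (hodd : Odd p) (s : ℕ) :
    ∑ m ∈ range (p ^ s), (reducedChoose p (lowestNonzeroDigit p m) : ZMod p) = 0 := by
  induction s with
  | zero =>
    rw [pow_zero, sum_range_one, lowestNonzeroDigit_of_lt hp hp.pos, reducedChoose_zero hp.one_lt,
      Int.cast_zero]
  | succ s ih =>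
    have hN := pow_pos hp.pos s
    have hblock : ∀ i, (i * p ^ s + p ^ s - 1) / p ^ s = i := fun i =>
      Nat.div_eq_of_lt_le (by omega) (by rw [add_one_mul]; omega)
    rw [pow_succ', sum_range_mul_eq_sum_sum_Ico]
    simp only [sum_Ico_reducedChoose_lowestNonzeroDigit hp, ih, hblock, zero_add]
    rw [sum_congr rfl fun i hi => by rw [lowestNonzeroDigit_of_lt hp (mem_range.mp hi)],
      ← Int.cast_sum, sum_range_reducedChoose hp hodd, Int.cast_zero]

lemma sum_range_reducedChoose_lowestNonzeroDigit_sub (hp : p.Prime) (hodd : Odd p) {s n : ℕ}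
    (hn : p ^ s ≤ n) :
    ∑ m ∈ range (p ^ s), (reducedChoose p (lowestNonzeroDigit p (n - m)) : ZMod p)
      = reducedChoose p (lowestNonzeroDigit p (n / p ^ s)) := by
  have hN := pow_pos hp.pos s
  rw [← sum_range_reflect]
  calc ∑ j ∈ range (p ^ s),
        (reducedChoose p (lowestNonzeroDigit p (n - (p ^ s - 1 - j))) : ZMod p)
      = ∑ m ∈ Ico (n + 1 - p ^ s) (n + 1 - p ^ s + p ^ s),
          (reducedChoose p (lowestNonzeroDigit p m) : ZMod p) := by
        rw [sum_Ico_eq_sum_range, Nat.add_sub_cancel_left]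
        refine sum_congr rfl fun j hj => ?_
        rw [mem_range] at hj
        congr 3
        omega
    _ = _ := by
        rw [sum_Ico_reducedChoose_lowestNonzeroDigit hp,
          sum_range_pow_reducedChoose_lowestNonzeroDigit hp hodd, zero_add,
          show n + 1 - p ^ s + p ^ s - 1 = n by omega]

end DigitSums

section SquareZero

variable {S : Type*} [CommRing S]

lemma prod_one_add_mul_of_sq_eq_zero {ι : Type*} {a : S} (ha : a ^ 2 = 0)
    (s : Finset ι) (f : ι → S) : ∏ i ∈ s, (1 + a * f i) = 1 + a * ∑ i ∈ s, f i := by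
  classical
  induction s using Finset.induction_on with
  | empty => simp
  | insert i s hi ih =>
    rw [prod_insert hi, sum_insert hi, ih]
    linear_combination (f i * ∑ j ∈ s, f j) * ha

lemma one_add_natCast_mul_pow_prime_pow {p s : ℕ} (hp2 : (p : S) ^ 2 = 0) (hs : 1 ≤ s) (u : S) :
    (1 + p * u) ^ p ^ s = 1 := by
  have h := dvd_sub_pow_of_dvd_sub (p := p) (a := 1 + p * u) (b := 1) ⟨u, by ring⟩ s
  rwa [one_pow, show s + 1 = 2 + (s - 1) by omega, pow_add, hp2, zero_mul, zero_dvd_iff,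
    sub_eq_zero] at h

end SquareZero

section PowerSeries

variable {R : Type*} [CommRing R] {p : ℕ}

lemma natCast_sq_eq_zero (hR : (p : R) ^ 2 = 0) : (p : R⟦X⟧) ^ 2 = 0 := by
  rw [← map_natCast C, ← map_pow, hR, map_zero]

-- The series `V(X ^ q) / (1 - X ^ (q * p))`, `V(Y) = ∑ₖ reducedChoose p k * Y ^ k`.
def digitSeries (R : Type*) [CommRing R] (p q : ℕ) : R⟦X⟧ :=
  mk fun m => ((if q ∣ m then reducedChoose p (m / q % p) else 0 : ℤ) : R)

lemma one_sub_X_pow_mul_digitSeries (hp : 1 < p) {q : ℕ} (hq : 0 < q) :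
    (1 - X ^ (q * p)) * digitSeries R p q
      = ∑ k ∈ Ioo 0 p, C (reducedChoose p k : R) * X ^ (q * k) := by
  ext m
  simp only [sub_mul, one_mul, map_sub, coeff_X_pow_mul', digitSeries, coeff_mk, map_sum,
    coeff_C_mul_X_pow]
  by_cases hqm : q ∣ m
  · obtain ⟨a, rfl⟩ := hqm
    simp only [mul_right_inj' hq.ne', Finset.sum_ite_eq, mem_Ioo, Nat.mul_le_mul_left_iff hq,
      ← Nat.mul_sub, dvd_mul_right, if_true]
    rw [Nat.mul_div_cancel_left a hq]
    by_cases hpa : p ≤ a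
    · rw [if_pos hpa, if_neg (by omega), Nat.mul_div_cancel_left _ hq,
        ← Nat.add_mod_right (a - p), Nat.sub_add_cancel hpa, sub_self]
    · rw [if_neg hpa, sub_zero, Nat.mod_eq_of_lt (not_le.mp hpa)]
      split_ifs with ha
      · rfl
      · obtain rfl : a = 0 := by omega
        rw [reducedChoose_zero hp, Int.cast_zero]
  · have hsub : ∀ k, m ≠ q * k := fun k h => hqm (h ▸ dvd_mul_right q k)
    have hshift : q * p ≤ m → ¬ q ∣ m - q * p := fun hle h =>
      hqm (Nat.sub_add_cancel hle ▸ dvd_add h (dvd_mul_right q p))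
    rw [if_neg hqm, sum_eq_zero fun k _ => if_neg (hsub k)]
    by_cases hle : q * p ≤ m
    · simp [hle, hshift hle]
    · simp [hle]

lemma one_sub_X_pow_pow_prime (hp : p.Prime) (hodd : Odd p) {q : ℕ} (hq : 0 < q) :
    (1 - X ^ q : R⟦X⟧) ^ p = (1 - X ^ (q * p)) * (1 + (p : R⟦X⟧) * digitSeries R p q) := by
  have h := add_pow_prime_eq' hp (-X ^ q : R⟦X⟧) 1
  have hterm : ∀ k ∈ Ioo 0 p,
      (-X ^ q : R⟦X⟧) ^ k * 1 ^ (p - k) * ((p.choose k / p : ℕ) : R⟦X⟧)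
        = C (reducedChoose p k : R) * X ^ (q * k) := by
    intro k _
    rw [neg_pow, one_pow, mul_one, ← pow_mul, reducedChoose, Int.cast_mul, Int.cast_pow,
      Int.cast_neg, Int.cast_one, Int.cast_natCast, map_mul, map_pow, map_neg, map_one, map_natCast]
    ring
  rw [neg_add_eq_sub, sum_congr rfl hterm, ← one_sub_X_pow_mul_digitSeries hp.one_lt hq,
    hodd.neg_pow, ← pow_mul] at h
  rw [h]
  ring

lemma coeff_sum_digitSeries (hp : p.Prime) {t m : ℕ} (hm : 0 < m) (hmt : m < p ^ t) :
    coeff m (∑ i ∈ range t, digitSeries R p (p ^ i))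
      = reducedChoose p (lowestNonzeroDigit p m) := by
  simp only [map_sum, digitSeries, coeff_mk]
  rw [← Int.cast_sum, sum_range_ite_reducedChoose hp hm hmt]

lemma one_sub_X_mul_prod_pow_pred (hp : p.Prime) (hodd : Odd p) (hR : (p : R) ^ 2 = 0) (t : ℕ) :
    (1 - X) * (∏ i ∈ range t, (1 - X ^ p ^ i : R⟦X⟧)) ^ (p - 1)
      = (1 - X ^ p ^ t) * (1 + (p : R⟦X⟧) * ∑ i ∈ range t, digitSeries R p (p ^ i)) := by
  set H := ∏ i ∈ range t, (1 - X ^ p ^ i : R⟦X⟧)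
  have hH : IsUnit H := by
    rw [isUnit_iff_constantCoeff, map_prod]
    simp [zero_pow (pow_ne_zero _ hp.ne_zero)]
  have htel :
      (1 - X) * ∏ i ∈ range t, (1 - X ^ p ^ (i + 1) : R⟦X⟧) = H * (1 - X ^ p ^ t) := by
    rw [← prod_range_succ, prod_range_succ', pow_zero, pow_one, mul_comm]
  apply hH.mul_left_cancel
  calc H * ((1 - X) * H ^ (p - 1))
      = (1 - X) * H ^ p := by
        rw [mul_left_comm, ← pow_succ', Nat.sub_add_cancel hp.one_le]
    _ = (1 - X) * ∏ i ∈ range t, (1 - X ^ p ^ i : R⟦X⟧) ^ p := by rw [prod_pow]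
    _ = (1 - X) * ∏ i ∈ range t,
          ((1 - X ^ p ^ (i + 1)) * (1 + (p : R⟦X⟧) * digitSeries R p (p ^ i))) := by
        simp only [one_sub_X_pow_pow_prime hp hodd (pow_pos hp.pos _), ← pow_succ]
    _ = H * ((1 - X ^ p ^ t)
          * (1 + (p : R⟦X⟧) * ∑ i ∈ range t, digitSeries R p (p ^ i))) := by
        rw [prod_mul_distrib, prod_one_add_mul_of_sq_eq_zero (natCast_sq_eq_zero hR),
          ← mul_assoc, htel, mul_assoc]

lemma natCast_mul_one_sub_X_pow_pred (hp : p.Prime) (hodd : Odd p) (hR : (p : R) ^ 2 = 0)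
    (s : ℕ) :
    (p : R⟦X⟧) * (1 - X) ^ (p ^ s - 1) = (p : R⟦X⟧) * ∑ m ∈ range (p ^ s), X ^ m := by
  obtain ⟨r, hr⟩ := exists_add_pow_prime_pow_eq hp (1 : R⟦X⟧) (-X) s
  have hfrob : (p : R⟦X⟧) * (1 - X) ^ p ^ s = (p : R⟦X⟧) * (1 - X ^ p ^ s) := by
    rw [sub_eq_add_neg, hr, (hodd.pow (n := s)).neg_pow, one_pow]
    linear_combination (-X * r) * (natCast_sq_eq_zero hR)
  have hunit : IsUnit (1 - X : R⟦X⟧) := by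
    rw [isUnit_iff_constantCoeff]
    simp
  apply hunit.mul_right_cancel
  rw [mul_assoc, ← pow_succ, Nat.sub_add_cancel (pow_pos hp.pos s), hfrob, mul_assoc,
    geom_sum_mul_neg]

lemma coeff_one_sub_X_pow_of_lt {k n : ℕ} (h : k < n) : coeff n ((1 - X : R⟦X⟧) ^ k) = 0 := by
  have hcoe : (1 - X : R⟦X⟧) ^ k = (((1 - Polynomial.X) ^ k : Polynomial R) : R⟦X⟧) := by
    push_cast
    rfl
  have hdeg : ((1 - Polynomial.X) ^ k : Polynomial R).natDegree ≤ k := by compute_degree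
  rw [hcoe, Polynomial.coeff_coe, Polynomial.coeff_eq_zero_of_natDegree_lt (hdeg.trans_lt h)]

lemma coeff_mul_of_X_pow_dvd_sub_one {f g : R⟦X⟧} {Q n : ℕ} (hg : X ^ Q ∣ g - 1)
    (hn : n < Q) :
    coeff n (f * g) = coeff n f := by
  have h := X_pow_dvd_iff.mp (hg.mul_left f) n hn
  rwa [mul_sub, mul_one, map_sub, sub_eq_zero] at h

lemma X_pow_dvd_one_sub_X_pow_pow_sub_one (Q k : ℕ) :
    (X ^ Q : R⟦X⟧) ∣ (1 - X ^ Q) ^ k - 1 := by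
  have h := sub_dvd_pow_sub_pow (1 - X ^ Q : R⟦X⟧) 1 k
  rwa [one_pow, sub_sub_cancel_left, neg_dvd] at h

lemma map_prod_invOfUnit_mul_prod_pow {A : Type*} [CommRing A] (φ : A →+* R) {m : ℕ}
    (hm : m ≠ 0) (t k : ℕ) :
    map φ (∏ i ∈ range t, invOfUnit (1 - X ^ m ^ i : A⟦X⟧) 1 ^ k)
      * (∏ i ∈ range t, (1 - X ^ m ^ i : R⟦X⟧)) ^ k = 1 := by
  have hinv : ∀ i, (1 - X ^ m ^ i : A⟦X⟧) * invOfUnit (1 - X ^ m ^ i) 1 = 1 := fun i =>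
    mul_invOfUnit _ _ (by simp [zero_pow (pow_ne_zero i hm)])
  have h : (∏ i ∈ range t, invOfUnit (1 - X ^ m ^ i : A⟦X⟧) 1 ^ k)
      * (∏ i ∈ range t, (1 - X ^ m ^ i : A⟦X⟧)) ^ k = 1 := by
    rw [← prod_pow, ← prod_mul_distrib]
    exact prod_eq_one fun i _ => by rw [← mul_pow, mul_comm, hinv, one_pow]
  simpa using congrArg (map φ) h

lemma map_prod_invOfUnit_mul_one_sub_X_pow_pow (hp : p.Prime) (hodd : Odd p)
    (hR : (p : R) ^ 2 = 0) {s : ℕ} (hs : 1 ≤ s) (t : ℕ) :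
    map (Int.castRingHom R)
        (∏ i ∈ range t, invOfUnit (1 - X ^ p ^ i : ℤ⟦X⟧) 1 ^ ((p - 1) * (p ^ s - 1)))
      * (1 - X ^ p ^ t) ^ (p ^ s - 1)
      = (1 - X) ^ (p ^ s - 1)
        * (1 + (p : R⟦X⟧) * ∑ i ∈ range t, digitSeries R p (p ^ i)) := by
  set A := map (Int.castRingHom R)
    (∏ i ∈ range t, invOfUnit (1 - X ^ p ^ i : ℤ⟦X⟧) 1 ^ ((p - 1) * (p ^ s - 1)))
  set E := 1 + (p : R⟦X⟧) * ∑ i ∈ range t, digitSeries R p (p ^ i)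
  have hinv :
      A * ((∏ i ∈ range t, (1 - X ^ p ^ i : R⟦X⟧)) ^ (p - 1)) ^ (p ^ s - 1) = 1 := by
    rw [← pow_mul]
    exact map_prod_invOfUnit_mul_prod_pow _ hp.ne_zero _ _
  have hE : E ^ p ^ s = 1 := one_add_natCast_mul_pow_prime_pow (natCast_sq_eq_zero hR) hs _
  calc A * (1 - X ^ p ^ t) ^ (p ^ s - 1)
      = A * ((1 - X ^ p ^ t) * E) ^ (p ^ s - 1) * E := by
        rw [mul_pow, mul_assoc, mul_assoc, ← pow_succ, Nat.sub_add_cancel (pow_pos hp.pos s), hE,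
          mul_one]
    _ = (1 - X) ^ (p ^ s - 1) * E := by
        rw [← one_sub_X_mul_prod_pow_pred hp hodd hR, mul_pow, mul_left_comm, hinv, mul_one]

end PowerSeries

section Main

variable {p : ℕ}

lemma Acoef_cast_eq {R : Type*} [CommRing R] (hp : p.Prime) (hodd : Odd p) (hR : (p : R) ^ 2 = 0)
    {s n : ℕ} (hs : 1 ≤ s) (hn : p ^ s ≤ n) :
    (Acoef p ((p - 1) * (p ^ s - 1)) n : R)
      = p * ∑ m ∈ range (p ^ s), (reducedChoose p (lowestNonzeroDigit p (n - m)) : R) := by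
  have hlt : n < p ^ (n + 1) :=
    Nat.lt_pow_self hp.one_lt |>.trans (Nat.pow_lt_pow_right hp.one_lt n.lt_succ_self)
  have hdeg : p ^ s - 1 < n := Nat.sub_one_lt_of_le (pow_pos hp.pos s) hn
  -- Below degree `p ^ (n + 1)` the factor `(1 - X ^ p ^ (n + 1)) ^ (p ^ s - 1)` is invisible.
  rw [Acoef, ← eq_intCast (Int.castRingHom R), ← coeff_map,
    ← coeff_mul_of_X_pow_dvd_sub_one (X_pow_dvd_one_sub_X_pow_pow_sub_one _ (p ^ s - 1)) hlt,
    map_prod_invOfUnit_mul_one_sub_X_pow_pow hp hodd hR hs, mul_add, mul_one, map_add,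
    coeff_one_sub_X_pow_of_lt hdeg, zero_add, mul_left_comm, ← mul_assoc,
    natCast_mul_one_sub_X_pow_pred hp hodd hR, mul_assoc, ← map_natCast C, coeff_C_mul, sum_mul,
    map_sum]
  refine congrArg _ (sum_congr rfl fun m hm => ?_)
  rw [mem_range] at hm
  rw [coeff_X_pow_mul', if_pos (by omega), coeff_sum_digitSeries hp (by omega) (by omega)]

lemma emultiplicity_eq_one_of_intCast_eq_mul (hp : p.Prime) {a b : ℤ}
    (h : (a : ZMod (p ^ 2)) = p * b) (hb : ¬ (p : ℤ) ∣ b) : emultiplicity (p : ℤ) a = 1 := by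
  have hsq : (p : ℤ) ^ 2 ∣ a - p * b := by
    have h' : ((a - p * b : ℤ) : ZMod (p ^ 2)) = 0 := by push_cast; rw [h, sub_self]
    exact_mod_cast (ZMod.intCast_zmod_eq_zero_iff_dvd _ _).mp h'
  rw [← Nat.cast_one, emultiplicity_eq_coe, pow_one]
  constructor
  · simpa using dvd_add ((dvd_pow_self _ two_ne_zero).trans hsq) (dvd_mul_right (p : ℤ) b)
  · intro ha
    have hpb : (p : ℤ) * p ∣ p * b := by simpa [sq] using dvd_sub ha hsq
    exact hb ((mul_dvd_mul_iff_left (by exact_mod_cast hp.ne_zero)).mp hpb)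

end Main

end ColoredPartition

theorem stmt9 (p s : ℕ) (hp : p.Prime) (hp3 : 3 ≤ p) (hs : 1 ≤ s)
    (n : ℕ) (hn : p ^ s < n) :
    emultiplicity (p : ℤ) (Acoef p ((p - 1) * (p ^ s - 1)) n) = 1 := by
  have hodd : Odd p := hp.odd_of_ne_two (by omega)
  have hR : (p : ZMod (p ^ 2)) ^ 2 = 0 := by rw [← Nat.cast_pow, ZMod.natCast_self]
  have hq : n / p ^ s ≠ 0 := (Nat.div_pos hn.le (pow_pos hp.pos s)).ne'
  refine ColoredPartition.emultiplicity_eq_one_of_intCast_eq_mul hp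
    (b := ∑ m ∈ range (p ^ s),
      ColoredPartition.reducedChoose p (ColoredPartition.lowestNonzeroDigit p (n - m))) ?_ ?_
  · rw [ColoredPartition.Acoef_cast_eq hp hodd hR hs hn.le, Int.cast_sum]
  · rw [← ZMod.intCast_zmod_eq_zero_iff_dvd, Int.cast_sum,
      ColoredPartition.sum_range_reducedChoose_lowestNonzeroDigit_sub hp hodd hn.le]
    exact ColoredPartition.reducedChoose_ne_zero hp
      (ColoredPartition.lowestNonzeroDigit_pos hp hq) (ColoredPartition.lowestNonzeroDigit_lt hp _)
end

section
/- Let p ≥ 3 be a prime, u ∈ {1,…,p−1}, s ∈ ℕ₊, and let n > u·p^s with base-p digits ε_0, ε_1, …, i.e., n = ∑_i ε_i p^i with ε_i ∈ {0,…,p−1}. Set C₁ = ∏_{i=0}^{s−1} (−1)^{ε_i} C(p−1, ε_i) and n_s = ⌊n / p^s⌋. Then A_{p,(p−1)(u·p^s−1)}(n) ≡ C₁ · ( ∑_{i=0}^{u} (−1)^i · C(u,i) · D_p(n_s − i) ) (mod p²), and moreover p ∤ C₁. -/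
open PowerSeries Finset

namespace Stmt15A

instance instCharPPS (p : ℕ) (R : Type) [CommRing R] [CharP R p] : CharP (PowerSeries R) p :=
  charP_of_injective_ringHom (f := (PowerSeries.C (R := R))) (fun a b h => by
    simpa using congrArg (PowerSeries.constantCoeff (R := R)) h) p

section ModX

variable {S : Type} [CommRing S]

lemma modx_mul {N : ℕ} {a b c d : S⟦X⟧} (h1 : (X:S⟦X⟧)^N ∣ a - b)
    (h2 : (X:S⟦X⟧)^N ∣ c - d) : (X:S⟦X⟧)^N ∣ a*c - b*d := by
  have h : a*c - b*d = a*(c-d) + (a-b)*d := by ring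
  rw [h]; exact dvd_add (h2.mul_left a) (h1.mul_right d)

lemma modx_pow {N e : ℕ} {a b : S⟦X⟧} (h : (X:S⟦X⟧)^N ∣ a - b) :
    (X:S⟦X⟧)^N ∣ a^e - b^e := by
  induction e with
  | zero => simp
  | succ e ih => rw [pow_succ, pow_succ]; exact modx_mul ih h

lemma modx_prod {ι : Type} {N : ℕ} {F G : ι → S⟦X⟧} (s : Finset ι) :
    (∀ i ∈ s, (X:S⟦X⟧)^N ∣ F i - G i) →
    (X:S⟦X⟧)^N ∣ (∏ i ∈ s, F i) - ∏ i ∈ s, G i := by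
  classical
  induction s using Finset.induction with
  | empty => intro _; simp
  | @insert a s ha ih =>
    intro h
    rw [Finset.prod_insert ha, Finset.prod_insert ha]
    exact modx_mul (h a (Finset.mem_insert_self a s))
      (ih fun i hi => h i (Finset.mem_insert_of_mem hi))

lemma coeff_eq {N n : ℕ} {a b : S⟦X⟧} (hn : n < N) (h : (X:S⟦X⟧)^N ∣ a - b) :
    coeff (R := S) n a = coeff (R := S) n b := by
  have h2 := X_pow_dvd_iff.mp h n hn
  rw [map_sub, sub_eq_zero] at h2; exact h2

end ModX

lemma exists_p_eq (p : ℕ) (φ : ℤ⟦X⟧) (h : ∀ j, (p:ℤ) ∣ coeff (R := ℤ) j φ) :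
    ∃ ψ : ℤ⟦X⟧, φ = (p:ℤ⟦X⟧) * ψ ∧ ∀ j, coeff (R := ℤ) j φ = 0 → coeff (R := ℤ) j ψ = 0 := by
  refine ⟨PowerSeries.mk fun j => coeff (R := ℤ) j φ / p, ?_, ?_⟩
  · ext j
    rw [show ((p:ℕ):ℤ⟦X⟧) = PowerSeries.C (R := ℤ) ((p:ℕ):ℤ) from (map_natCast (PowerSeries.C (R := ℤ)) p).symm,
      coeff_C_mul, coeff_mk]
    exact (Int.mul_ediv_cancel' (h j)).symm
  · intro j hj; rw [coeff_mk, hj]; simp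

lemma map_zero_dvd (p : ℕ) [NeZero p] (φ : ℤ⟦X⟧)
    (h : PowerSeries.map (Int.castRingHom (ZMod p)) φ = 0) : ∀ j, (p:ℤ) ∣ coeff (R := ℤ) j φ := by
  intro j
  have h2 := congrArg (coeff (R := (ZMod p)) j) h
  rw [PowerSeries.coeff_map, map_zero] at h2
  exact (ZMod.intCast_zmod_eq_zero_iff_dvd _ p).mp (by simpa using h2)

lemma choose_cast_eq (p : ℕ) (hp : p.Prime) : ∀ ε, ε < p →
    (((p-1).choose ε : ℤ) : ZMod p) = (-1)^ε := by
  intro ε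
  induction ε with
  | zero => simp
  | succ ε ih =>
    intro hε
    have hP : (p-1).choose ε + (p-1).choose (ε+1) = p.choose (ε+1) := by
      have h1 : p - 1 + 1 = p := Nat.succ_pred_eq_of_pos hp.pos
      rw [← h1]
      exact (Nat.choose_succ_succ _ _).symm
    have h0 : ((p.choose (ε+1) : ℤ) : ZMod p) = 0 := by
      rw [ZMod.intCast_zmod_eq_zero_iff_dvd]
      exact_mod_cast Int.natCast_dvd_natCast.mpr (hp.dvd_choose_self (by omega) hε)
    have h3 : (((p-1).choose ε : ℤ) : ZMod p) + (((p-1).choose (ε+1) : ℤ) : ZMod p)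
        = ((p.choose (ε+1) : ℤ) : ZMod p) := by
      rw [← Int.cast_add]
      congr 1
      exact_mod_cast congrArg (Nat.cast : ℕ → ℤ) hP
    rw [ih (by omega), h0] at h3
    have h2 : (((p-1).choose (ε+1) : ℤ) : ZMod p) = -(-1)^ε := by linear_combination h3
    rw [h2, pow_succ]; ring

section Poly

open Polynomial

lemma coeff_one_sub_X_pow (e a : ℕ) :
    ((1 - Polynomial.X : Polynomial ℤ)^e).coeff a = (-1)^a * (e.choose a : ℤ) := by
  have h : (1 - Polynomial.X : Polynomial ℤ) = -Polynomial.X + 1 := by ring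
  rw [h, add_pow]
  rw [Polynomial.finset_sum_coeff]
  have hterm : ∀ k, ((-Polynomial.X : Polynomial ℤ)^k * 1^(e-k) * (e.choose k : Polynomial ℤ)).coeff a
      = if k = a then (-1)^a * (e.choose a : ℤ) else 0 := by
    intro k
    have h2 : ((-Polynomial.X : Polynomial ℤ)^k * 1^(e-k) * (e.choose k : Polynomial ℤ))
        = Polynomial.C ((-1)^k * (e.choose k : ℤ)) * Polynomial.X^k := by
      rw [neg_pow]
      have hc : (Polynomial.C ((e.choose k : ℤ))) = ((e.choose k : ℕ) : Polynomial ℤ) := by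
        rfl
      simp only [map_mul, map_pow, map_neg, map_one, hc]
      ring
    rw [h2, Polynomial.coeff_C_mul, Polynomial.coeff_X_pow]
    split_ifs with h3 h4 h5
    · rw [h4]; ring
    · exact absurd h3.symm h4
    · exact absurd h5.symm h3
    · ring
  rw [Finset.sum_congr rfl fun k _ => hterm k]
  by_cases ha : a ≤ e
  · rw [Finset.sum_ite_eq' (range (e+1)) a]
    simp [Nat.lt_succ_of_le ha]
  · push_neg at ha
    rw [Finset.sum_ite_eq' (range (e+1)) a]
    simp [Nat.choose_eq_zero_of_lt ha, Nat.lt_succ, Nat.not_le.mpr ha]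

lemma coeff_aeval_X_pow (t : ℕ) (ht : 1 ≤ t) (B : Polynomial ℤ) (b : ℕ) :
    (Polynomial.aeval ((Polynomial.X : Polynomial ℤ)^t) B).coeff b
      = if t ∣ b then B.coeff (b / t) else 0 := by
  induction B using Polynomial.induction_on' with
  | add f g hf hg =>
    rw [map_add, Polynomial.coeff_add, hf, hg]
    split_ifs <;> simp [Polynomial.coeff_add]
  | monomial j c =>
    rw [Polynomial.aeval_monomial, ← pow_mul]
    rw [show (algebraMap ℤ (Polynomial ℤ)) c = Polynomial.C c from rfl,
      Polynomial.coeff_C_mul, Polynomial.coeff_X_pow, Polynomial.coeff_monomial]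
    by_cases hd : t ∣ b
    · obtain ⟨m, rfl⟩ := hd
      rw [if_pos (dvd_mul_right t m), Nat.mul_div_cancel_left m (by omega : 0 < t)]
      by_cases hjm : j = m
      · subst hjm; rw [if_pos rfl, if_pos rfl, mul_one]
      · have hne2 : ¬(t*m = t*j) :=
          fun hc => hjm (Nat.eq_of_mul_eq_mul_left (show 0 < t by omega) hc).symm
        rw [if_neg hne2, if_neg hjm, mul_zero]
    · rw [if_neg hd, if_neg (fun hc : b = t*j => hd ⟨j, hc⟩), mul_zero]

lemma coeff_mul_aeval (A B : Polynomial ℤ) (t m : ℕ) (hA : A.natDegree < t) :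
    (A * Polynomial.aeval ((Polynomial.X : Polynomial ℤ)^t) B).coeff m
      = A.coeff (m % t) * B.coeff (m / t) := by
  have ht : 1 ≤ t := by omega
  rw [Polynomial.coeff_mul, Finset.Nat.sum_antidiagonal_eq_sum_range_succ_mk]
  have hmt : m % t ≤ m := Nat.mod_le m t
  rw [Finset.sum_eq_single (m % t)]
  · rw [coeff_aeval_X_pow t ht]
    have hd : t ∣ m - m % t := by
      have h1 := Nat.mod_add_div m t
      exact ⟨m / t, by omega⟩
    rw [if_pos hd]
    congr 1
    have h1 := Nat.mod_add_div m t
    have h2 : m - m % t = t * (m / t) := by omega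
    rw [h2, Nat.mul_div_cancel_left _ (by omega : 0 < t)]
  · intro k hk hne
    by_cases hAk : A.coeff k = 0
    · rw [hAk, zero_mul]
    · have hk1 : k ≤ A.natDegree := Polynomial.le_natDegree_of_ne_zero hAk
      rw [coeff_aeval_X_pow t ht, if_neg, mul_zero]
      intro hdvd
      obtain ⟨c, hc⟩ := hdvd
      apply hne
      have hkm : k ≤ m := by
        have := Finset.mem_range.mp hk; omega
      have h3 : m = t * c + k := by omega
      rw [h3, Nat.mul_add_mod]
      exact (Nat.mod_eq_of_lt (lt_of_le_of_lt hk1 hA)).symm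
  · intro h; exact absurd (Finset.mem_range.mpr (Nat.lt_succ_of_le hmt)) h

lemma coe_prod_pow (s : Finset ℕ) (w : ℕ → ℕ) (e : ℕ) :
    ((∏ i ∈ s, ((1:Polynomial ℤ) - Polynomial.X^(w i))^e : Polynomial ℤ) : ℤ⟦X⟧)
      = ∏ i ∈ s, ((1:ℤ⟦X⟧) - PowerSeries.X^(w i))^e := by
  rw [← Polynomial.coeToPowerSeries.ringHom_apply, map_prod]
  refine Finset.prod_congr rfl fun i _ => ?_
  rw [map_pow, map_sub, map_one, map_pow]
  simp

lemma coe_one_sub_pow (t e : ℕ) :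
    ((((1:Polynomial ℤ) - Polynomial.X^t)^e : Polynomial ℤ) : ℤ⟦X⟧) = ((1:ℤ⟦X⟧) - PowerSeries.X^t)^e := by
  rw [← Polynomial.coeToPowerSeries.ringHom_apply, map_pow, map_sub, map_one, map_pow]
  simp

end Poly

lemma geom_nat (p : ℕ) (hp : 1 ≤ p) : ∀ s, (∑ i ∈ range s, (p-1) * p^i) + 1 = p^s := by
  intro s
  induction s with
  | zero => simp
  | succ s ih =>
    rw [Finset.sum_range_succ, pow_succ]
    have h1 : (p-1) * p^s + p^s = p * p^s := by
      have h0 : p - 1 + 1 = p := Nat.succ_pred_eq_of_pos hp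
      calc (p-1) * p^s + p^s = ((p-1)+1) * p^s := by ring
      _ = p * p^s := by rw [h0]
    have h2 : p * p^s = p^s * p := mul_comm _ _
    omega

lemma stab (p e N₁ N₂ m : ℕ) (hp2 : 2 ≤ p) (h12 : N₁ ≤ N₂) (hm : m < 2^N₁) :
    coeff (R := ℤ) m (∏ i ∈ range N₂, (1 - X^(p^i) : ℤ⟦X⟧)^e)
      = coeff (R := ℤ) m (∏ i ∈ range N₁, (1 - X^(p^i) : ℤ⟦X⟧)^e) := by
  obtain ⟨d, rfl⟩ := Nat.exists_eq_add_of_le h12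
  rw [Finset.prod_range_add]
  refine coeff_eq (Nat.lt_succ_self m) ?_
  have h1 : (X:ℤ⟦X⟧)^(m+1) ∣ (∏ t ∈ range d, (1 - X^(p^(N₁+t)):ℤ⟦X⟧)^e) - 1 := by
    have h := modx_prod (N := m+1) (F := fun t => (1 - X^(p^(N₁+t)):ℤ⟦X⟧)^e)
      (G := fun _ => (1:ℤ⟦X⟧)) (range d) ?_
    · simpa using h
    · intro t _
      have hle : m + 1 ≤ p^(N₁+t) := by
        calc m + 1 ≤ 2^N₁ := hm
        _ ≤ p^N₁ := Nat.pow_le_pow_left hp2 N₁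
        _ ≤ p^(N₁+t) := Nat.pow_le_pow_right (by omega) (by omega)
      have hdvd : (X:ℤ⟦X⟧)^(m+1) ∣ (1 - X^(p^(N₁+t))) - 1 := by
        have h2 : (1 - X^(p^(N₁+t)) : ℤ⟦X⟧) - 1 = -(X^(p^(N₁+t))) := by ring
        rw [h2]
        exact (dvd_neg).mpr (pow_dvd_pow X hle)
      simpa using modx_pow (e := e) hdvd
  have h0 : (X:ℤ⟦X⟧)^(m+1) ∣ (∏ i ∈ range N₁, (1 - X^(p^i) : ℤ⟦X⟧)^e)
      - (∏ i ∈ range N₁, (1 - X^(p^i) : ℤ⟦X⟧)^e) := by simp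
  have h3 := modx_mul h0 h1
  simpa using h3

lemma one_sub_X_pow_inv (t : ℕ) (ht : 1 ≤ t) :
    (1 - X^t : ℤ⟦X⟧) * PowerSeries.invOfUnit (1 - X^t) 1 = 1 := by
  apply PowerSeries.mul_invOfUnit
  have h : t ≠ 0 := by omega
  simp [h]

lemma prod_inv_one_pow (T : Finset ℕ) (w : ℕ → ℕ) (hw : ∀ i ∈ T, 1 ≤ w i) (k : ℕ) :
    (∏ i ∈ T, ((1:ℤ⟦X⟧) - X^(w i))^k) * (∏ i ∈ T, (PowerSeries.invOfUnit ((1:ℤ⟦X⟧) - X^(w i)) 1)^k) = 1 := by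
  calc (∏ i ∈ T, ((1:ℤ⟦X⟧) - X^(w i))^k) * (∏ i ∈ T, (PowerSeries.invOfUnit ((1:ℤ⟦X⟧) - X^(w i)) 1)^k)
      = ∏ i ∈ T, (((1:ℤ⟦X⟧) - X^(w i))^k * (PowerSeries.invOfUnit ((1:ℤ⟦X⟧) - X^(w i)) 1)^k) :=
        (Finset.prod_mul_distrib).symm
    _ = ∏ i ∈ T, 1 := Finset.prod_congr rfl fun i hi => by
        rw [← mul_pow, one_sub_X_pow_inv _ (hw i hi), one_pow]
    _ = 1 := Finset.prod_const_one

noncomputable def fM (p M : ℕ) : ℤ⟦X⟧ := ∏ i ∈ range M, (1 - X^(p^i))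
noncomputable def gM (p M : ℕ) : ℤ⟦X⟧ := ∏ i ∈ range (M-1), (1 - X^(p^(i+1)))
noncomputable def gMinv (p M : ℕ) : ℤ⟦X⟧ :=
  ∏ i ∈ range (M-1), PowerSeries.invOfUnit (1 - X^(p^(i+1))) 1
noncomputable def hMser (p M : ℕ) : ℤ⟦X⟧ := ∏ i ∈ range M, (1 - X^(p^i))^p

lemma gM_mul_inv (p M : ℕ) (hp : 1 ≤ p) : gM p M * gMinv p M = 1 := by
  have h := prod_inv_one_pow (range (M-1)) (fun i => p^(i+1))
    (fun i _ => Nat.one_le_pow _ _ (by omega)) 1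
  simpa [gM, gMinv] using h

lemma fM_factor (p M : ℕ) (hM : 1 ≤ M) : fM p M = (1 - X) * gM p M := by
  unfold fM gM
  obtain ⟨m, rfl⟩ : ∃ m, M = m+1 := ⟨M-1, by omega⟩
  rw [Finset.prod_range_succ']
  have h0 : p^(0:ℕ) = 1 := pow_zero p
  rw [h0, pow_one]
  have h1 : m + 1 - 1 = m := rfl
  rw [h1, mul_comm]

lemma Vg_eq (p M : ℕ) (hp : 1 ≤ p) (hM : 1 ≤ M) :
    (fM p M)^(p-1) * (1 - X) * gM p M = hMser p M := by
  have h1 : hMser p M = (fM p M)^(p-1) * fM p M := by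
    unfold hMser fM
    rw [← Finset.prod_pow, ← Finset.prod_mul_distrib]
    refine Finset.prod_congr rfl fun i _ => ?_
    rw [← pow_succ]
    congr 1
    omega
  rw [h1, fM_factor p M hM]; ring

lemma maph (p M : ℕ) (hp : p.Prime) (hM : 1 ≤ M) :
    PowerSeries.map (Int.castRingHom (ZMod p)) (hMser p M)
      = PowerSeries.map (Int.castRingHom (ZMod p)) (gM p M * (1 - X^(p^M))) := by
  haveI : Fact p.Prime := ⟨hp⟩
  have hfac : ∀ i : ℕ, PowerSeries.map (Int.castRingHom (ZMod p)) ((1 - X^(p^i) : ℤ⟦X⟧)^p)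
      = 1 - (X:(ZMod p)⟦X⟧)^(p^(i+1)) := by
    intro i
    rw [map_pow, map_sub, map_one, map_pow, PowerSeries.map_X]
    rw [sub_pow_char, one_pow, ← pow_mul, ← pow_succ]
  have hmap : ∀ t : ℕ, PowerSeries.map (Int.castRingHom (ZMod p)) (1 - X^t : ℤ⟦X⟧)
      = 1 - (X:(ZMod p)⟦X⟧)^t := by
    intro t
    rw [map_sub, map_one, map_pow, PowerSeries.map_X]
  obtain ⟨m, rfl⟩ : ∃ m, M = m+1 := ⟨M-1, by omega⟩
  unfold hMser gM
  rw [map_mul, map_prod, map_prod]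
  have h1 : m + 1 - 1 = m := rfl
  rw [h1]
  calc ∏ i ∈ range (m+1), PowerSeries.map (Int.castRingHom (ZMod p)) ((1 - X^(p^i) : ℤ⟦X⟧)^p)
      = ∏ i ∈ range (m+1), (1 - (X:(ZMod p)⟦X⟧)^(p^(i+1))) :=
        Finset.prod_congr rfl fun i _ => hfac i
    _ = (∏ i ∈ range m, (1 - (X:(ZMod p)⟦X⟧)^(p^(i+1)))) * (1 - (X:(ZMod p)⟦X⟧)^(p^(m+1))) :=
        Finset.prod_range_succ _ m
    _ = (∏ i ∈ range m, PowerSeries.map (Int.castRingHom (ZMod p)) (1 - X^(p^(i+1)) : ℤ⟦X⟧))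
          * PowerSeries.map (Int.castRingHom (ZMod p)) (1 - X^(p^(m+1)) : ℤ⟦X⟧) := by
        rw [Finset.prod_congr rfl fun i _ => (hmap (p^(i+1))).symm, hmap]

lemma mapV (p M : ℕ) (hp : p.Prime) (hM : 1 ≤ M) :
    PowerSeries.map (Int.castRingHom (ZMod p)) ((fM p M)^(p-1) * (1 - X))
      = 1 - (X:(ZMod p)⟦X⟧)^(p^M) := by
  set mf := PowerSeries.map (Int.castRingHom (ZMod p)) with hmf
  have hp1 : 1 ≤ p := hp.pos
  have h1 : mf ((fM p M)^(p-1) * (1 - X)) * mf (gM p M) = mf (gM p M) * mf (1 - X^(p^M)) := by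
    rw [← map_mul, Vg_eq p M hp1 hM, maph p M hp hM, map_mul]
  have hg1 : mf (gM p M) * mf (gMinv p M) = 1 := by
    rw [← map_mul, gM_mul_inv p M hp1, map_one]
  have hmap : mf (1 - X^(p^M) : ℤ⟦X⟧) = 1 - (X:(ZMod p)⟦X⟧)^(p^M) := by
    rw [hmf, map_sub, map_one, map_pow, PowerSeries.map_X]
  calc mf ((fM p M)^(p-1) * (1 - X))
      = mf ((fM p M)^(p-1) * (1 - X)) * (mf (gM p M) * mf (gMinv p M)) := by rw [hg1, mul_one]
    _ = (mf ((fM p M)^(p-1) * (1 - X)) * mf (gM p M)) * mf (gMinv p M) := by ring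
    _ = (mf (gM p M) * mf (1 - X^(p^M))) * mf (gMinv p M) := by rw [h1]
    _ = mf (1 - X^(p^M)) * (mf (gM p M) * mf (gMinv p M)) := by ring
    _ = 1 - (X:(ZMod p)⟦X⟧)^(p^M) := by rw [hg1, mul_one, hmap]

lemma lemA (p k n s : ℕ) (hp2 : 2 ≤ p) :
    coeff (R := ℤ) n (∏ i ∈ range (n+1), (PowerSeries.invOfUnit (1 - X^(p^i)) 1)^k)
      = coeff (R := ℤ) n (∏ i ∈ range (n+1+s), (PowerSeries.invOfUnit (1 - X^(p^i)) 1)^k) := by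
  have hsplit : (∏ i ∈ range (n+1+s), (PowerSeries.invOfUnit ((1:ℤ⟦X⟧) - X^(p^i)) 1)^k)
      = (∏ i ∈ range (n+1), (PowerSeries.invOfUnit ((1:ℤ⟦X⟧) - X^(p^i)) 1)^k)
        * ∏ t ∈ range s, (PowerSeries.invOfUnit ((1:ℤ⟦X⟧) - X^(p^(n+1+t))) 1)^k :=
    Finset.prod_range_add _ (n+1) s
  rw [hsplit]
  refine (coeff_eq (Nat.lt_succ_self n) ?_).symm
  have hJ : ∀ i : ℕ, n+1 ≤ p^i → (X:ℤ⟦X⟧)^(n+1) ∣ (PowerSeries.invOfUnit (1 - X^(p^i)) 1) - 1 := by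
    intro i hi
    have h1 : (1 - X^(p^i) : ℤ⟦X⟧) * PowerSeries.invOfUnit (1 - X^(p^i)) 1 = 1 :=
      one_sub_X_pow_inv _ (Nat.one_le_pow _ _ (by omega))
    have h2 : (PowerSeries.invOfUnit (1 - X^(p^i) : ℤ⟦X⟧) 1) - 1
        = X^(p^i) * PowerSeries.invOfUnit (1 - X^(p^i)) 1 := by
      linear_combination h1
    rw [h2]
    exact Dvd.dvd.mul_right (pow_dvd_pow X hi) _
  have hextra : (X:ℤ⟦X⟧)^(n+1)
      ∣ (∏ t ∈ range s, (PowerSeries.invOfUnit (1 - X^(p^(n+1+t))) 1)^k) - 1 := by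
    have h := modx_prod (N := n+1)
      (F := fun t => (PowerSeries.invOfUnit ((1:ℤ⟦X⟧) - X^(p^(n+1+t))) 1)^k)
      (G := fun _ => (1:ℤ⟦X⟧)) (range s) ?_
    · simpa using h
    · intro t _
      have hle : n+1 ≤ p^(n+1+t) := by
        calc n+1 ≤ 2^(n+1) := (Nat.lt_two_pow_self (n := n+1)).le
        _ ≤ p^(n+1) := Nat.pow_le_pow_left hp2 _
        _ ≤ p^(n+1+t) := Nat.pow_le_pow_right (by omega) (by omega)
      simpa using modx_pow (e := k) (hJ (n+1+t) hle)
  have h0 : (X:ℤ⟦X⟧)^(n+1) ∣ (∏ i ∈ range (n+1), (PowerSeries.invOfUnit ((1:ℤ⟦X⟧) - X^(p^i)) 1)^k)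
      - (∏ i ∈ range (n+1), (PowerSeries.invOfUnit ((1:ℤ⟦X⟧) - X^(p^i)) 1)^k) := by simp
  have hfin := modx_mul h0 hextra
  rwa [mul_one] at hfin

lemma lemB (p u s n : ℕ) (hp : p.Prime) (hs : 1 ≤ s) (hu1 : 1 ≤ u) (hn : u * p^s < n) :
    ((coeff (R := ℤ) n (∏ i ∈ range (n+1+s),
        (PowerSeries.invOfUnit (1 - X^(p^i)) 1)^((p-1)*(u*p^s-1)))
      - coeff (R := ℤ) n ((fM p (n+1+s))^(p-1) * (1 - X)^(u*p^s)) : ℤ) : ZMod (p^2)) = 0 := by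
  haveI : Fact p.Prime := ⟨hp⟩
  set M := n+1+s with hMdef
  set k := (p-1)*(u*p^s-1) with hk
  set mr := PowerSeries.map (Int.castRingHom (ZMod (p^2))) with hmr
  have hp2 : 2 ≤ p := hp.two_le
  have hM1 : 1 ≤ M := by omega
  have hnpM : n + 1 ≤ p^M := by
    calc n+1 ≤ M := by omega
    _ ≤ 2^M := (Nat.lt_two_pow_self (n := M)).le
    _ ≤ p^M := Nat.pow_le_pow_left hp2 _
  have hpR2 : ((p: (ZMod (p^2))⟦X⟧))^2 = 0 := by
    have h1 : ((p:(ZMod (p^2))⟦X⟧))^2 = ((p^2 : ℕ) : (ZMod (p^2))⟦X⟧) := by push_cast; ring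
    rw [h1, show ((p^2:ℕ) : (ZMod (p^2))⟦X⟧) = PowerSeries.C (R := (ZMod (p^2))) ((p^2:ℕ) : ZMod (p^2))
      from (map_natCast (PowerSeries.C (R := (ZMod (p^2)))) _).symm, ZMod.natCast_self, map_zero]
  obtain ⟨W, hW, -⟩ := exists_p_eq p (hMser p M - gM p M * (1 - X^(p^M)))
    (map_zero_dvd p _ (by rw [map_sub, maph p M hp hM1, sub_self]))
  have hdvd : ((p:ℕ) : (ZMod (p^2))⟦X⟧) ∣ mr (hMser p M) - mr (gM p M * (1 - X^(p^M))) := by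
    rw [← map_sub, hW, map_mul, map_natCast]
    exact dvd_mul_right _ _
  have hhp : (mr (hMser p M))^p = (mr (gM p M * (1 - X^(p^M))))^p := by
    have h2 := dvd_sub_pow_of_dvd_sub hdvd 1
    rw [pow_one] at h2
    rw [show (1:ℕ)+1 = 2 from rfl, hpR2, zero_dvd_iff, sub_eq_zero] at h2
    exact h2
  have hg1 : mr (gM p M) * mr (gMinv p M) = 1 := by
    rw [← map_mul, gM_mul_inv p M hp.pos, map_one]
  have hVp : (mr ((fM p M)^(p-1) * (1-X)))^p = (mr (1 - X^(p^M)))^p := by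
    have h3 : (mr ((fM p M)^(p-1)*(1-X)))^p * (mr (gM p M))^p = (mr (hMser p M))^p := by
      rw [← mul_pow, ← map_mul, Vg_eq p M hp.pos hM1]
    calc (mr ((fM p M)^(p-1) * (1-X)))^p
        = (mr ((fM p M)^(p-1) * (1-X)))^p * ((mr (gM p M))^p * (mr (gMinv p M))^p) := by
          rw [← mul_pow, hg1, one_pow, mul_one]
      _ = ((mr ((fM p M)^(p-1)*(1-X)))^p * (mr (gM p M))^p) * (mr (gMinv p M))^p := by ring
      _ = (mr (hMser p M))^p * (mr (gMinv p M))^p := by rw [h3]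
      _ = (mr (gM p M))^p * (mr (1 - X^(p^M)))^p * (mr (gMinv p M))^p := by
          rw [hhp, map_mul, mul_pow]
      _ = (mr (1 - X^(p^M)))^p * ((mr (gM p M) * mr (gMinv p M))^p) := by
          rw [mul_pow]; ring
      _ = (mr (1 - X^(p^M)))^p := by rw [hg1, one_pow, mul_one]
  have hJk : (fM p M)^k * (∏ i ∈ range M, (PowerSeries.invOfUnit (1 - X^(p^i)) 1)^k) = 1 := by
    unfold fM
    rw [← Finset.prod_pow]
    exact prod_inv_one_pow (range M) (fun i => p^i) (fun i _ => Nat.one_le_pow _ _ (by omega)) k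
  have huq1 : 1 ≤ u * p^s := Nat.le_trans hu1 (Nat.le_mul_of_pos_right u (by positivity))
  have he : k + (p-1) = (p-1)*(u*p^s) := by
    have h1 : u*p^s - 1 + 1 = u*p^s := by omega
    calc k + (p-1) = (p-1)*((u*p^s-1)+1) := by rw [hk]; ring
    _ = (p-1)*(u*p^s) := by rw [h1]
  have hkey : (fM p M)^k * ((fM p M)^(p-1) * (1 - X)^(u*p^s))
      = ((fM p M)^(p-1) * (1-X))^(u*p^s) := by
    have h4 : (fM p M)^k * ((fM p M)^(p-1) * (1-X)^(u*p^s))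
        = (fM p M)^(k+(p-1)) * (1-X)^(u*p^s) := by rw [pow_add]; ring
    rw [h4, he, mul_pow, ← pow_mul]
  have hVuq : (mr ((fM p M)^(p-1) * (1-X)))^(u*p^s)
      = ((mr ((fM p M)^(p-1) * (1-X)))^p)^(u*p^(s-1)) := by
    rw [← pow_mul]
    congr 1
    have h5 : p * p^(s-1) = p^s := by
      rw [← pow_succ']
      congr 1
      omega
    calc u * p^s = u * (p * p^(s-1)) := by rw [h5]
    _ = p * (u*p^(s-1)) := by ring
  have hVe : (X:(ZMod (p^2))⟦X⟧)^(n+1) ∣ (mr ((fM p M)^(p-1) * (1-X)))^(u*p^s) - 1 := by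
    rw [hVuq, hVp]
    have hbase : (X:(ZMod (p^2))⟦X⟧)^(n+1) ∣ (mr (1 - X^(p^M))) - 1 := by
      rw [hmr, map_sub, map_one, map_pow, PowerSeries.map_X]
      have h6 : (1:(ZMod (p^2))⟦X⟧) - X^(p^M) - 1 = -(X^(p^M)) := by ring
      rw [h6]
      exact dvd_neg.mpr (pow_dvd_pow X hnpM)
    have h7 := modx_pow (e := p) hbase
    rw [one_pow] at h7
    have h8 := modx_pow (e := u*p^(s-1)) h7
    rwa [one_pow] at h8
  have hfin : coeff (R := (ZMod (p^2))) n (mr (∏ i ∈ range M, (PowerSeries.invOfUnit (1 - X^(p^i)) 1)^k))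
      = coeff (R := (ZMod (p^2))) n (mr ((fM p M)^(p-1) * (1-X)^(u*p^s))) := by
    have h1 : mr ((fM p M)^(p-1) * (1-X)^(u*p^s))
        = mr (∏ i ∈ range M, (PowerSeries.invOfUnit (1 - X^(p^i)) 1)^k)
          * (mr ((fM p M)^(p-1) * (1-X)))^(u*p^s) := by
      calc mr ((fM p M)^(p-1) * (1-X)^(u*p^s))
          = mr ((fM p M)^k * (∏ i ∈ range M, (PowerSeries.invOfUnit (1 - X^(p^i)) 1)^k))
            * mr ((fM p M)^(p-1) * (1-X)^(u*p^s)) := by rw [hJk, map_one, one_mul]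
        _ = mr (∏ i ∈ range M, (PowerSeries.invOfUnit (1 - X^(p^i)) 1)^k)
            * mr ((fM p M)^k * ((fM p M)^(p-1) * (1-X)^(u*p^s))) := by
            simp only [map_mul]; ring
        _ = mr (∏ i ∈ range M, (PowerSeries.invOfUnit (1 - X^(p^i)) 1)^k)
            * (mr ((fM p M)^(p-1) * (1-X)))^(u*p^s) := by rw [hkey, map_pow]
    rw [h1]
    refine (coeff_eq (Nat.lt_succ_self n) ?_).symm
    have h0 : (X:(ZMod (p^2))⟦X⟧)^(n+1)
        ∣ mr (∏ i ∈ range M, (PowerSeries.invOfUnit (1 - X^(p^i)) 1)^k)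
          - mr (∏ i ∈ range M, (PowerSeries.invOfUnit (1 - X^(p^i)) 1)^k) := by simp
    have h9 := modx_mul h0 hVe
    simpa using h9
  rw [Int.cast_sub, sub_eq_zero]
  have hc1 : ((coeff (R := ℤ) n (∏ i ∈ range M, (PowerSeries.invOfUnit (1 - X^(p^i)) 1)^k) : ℤ)
      : ZMod (p^2)) = coeff (R := (ZMod (p^2))) n
        (mr (∏ i ∈ range M, (PowerSeries.invOfUnit (1 - X^(p^i)) 1)^k)) := by
    rw [hmr, PowerSeries.coeff_map]; simp
  have hc2 : ((coeff (R := ℤ) n ((fM p M)^(p-1) * (1 - X)^(u*p^s)) : ℤ) : ZMod (p^2))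
      = coeff (R := (ZMod (p^2))) n (mr ((fM p M)^(p-1) * (1-X)^(u*p^s))) := by
    rw [hmr, PowerSeries.coeff_map]; simp
  rw [hc1, hc2, hfin]

lemma lemC (p u s n : ℕ) (hp : p.Prime) (hs : 1 ≤ s) (hu1 : 1 ≤ u) (hn : u * p^s < n) :
    ((coeff (R := ℤ) n ((fM p (n+1+s))^(p-1) * (1 - X)^(u*p^s))
      - coeff (R := ℤ) n ((fM p (n+1+s))^(p-1) * (1 - X^(p^s))^u) : ℤ) : ZMod (p^2)) = 0 := by
  haveI : Fact p.Prime := ⟨hp⟩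
  have hp2 : 2 ≤ p := hp.two_le
  set q := p^s with hqdef
  set M := n+1+s with hMdef
  set mr := PowerSeries.map (Int.castRingHom (ZMod (p^2))) with hmr
  have hq1 : 1 ≤ q := Nat.one_le_pow _ _ (by omega)
  have hM1 : 1 ≤ M := by omega
  have hnpM : n + 1 ≤ p^M := by
    calc n+1 ≤ M := by omega
    _ ≤ 2^M := (Nat.lt_two_pow_self (n := M)).le
    _ ≤ p^M := Nat.pow_le_pow_left hp2 _
  have hpR2 : ((p: (ZMod (p^2))⟦X⟧))^2 = 0 := by
    have h1 : ((p:(ZMod (p^2))⟦X⟧))^2 = ((p^2 : ℕ) : (ZMod (p^2))⟦X⟧) := by push_cast; ring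
    rw [h1, show ((p^2:ℕ) : (ZMod (p^2))⟦X⟧) = PowerSeries.C (R := (ZMod (p^2))) ((p^2:ℕ) : ZMod (p^2))
      from (map_natCast (PowerSeries.C (R := (ZMod (p^2)))) _).symm, ZMod.natCast_self, map_zero]
  haveI : CharP (Polynomial (ZMod p)) p :=
    charP_of_injective_ringHom (f := (Polynomial.C : ZMod p →+* Polynomial (ZMod p)))
      (fun a b h => by simpa using congrArg (fun P => Polynomial.coeff P 0) h) p
  -- the polynomial ρ
  set ρp : Polynomial ℤ := ((1:Polynomial ℤ) - Polynomial.X)^(q-1) - ∑ j ∈ range q, Polynomial.X^j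
    with hρpdef
  have hρmap : ρp.map (Int.castRingHom (ZMod p)) = 0 := by
    have hne : ((1:Polynomial (ZMod p)) - Polynomial.X) ≠ 0 := by
      intro h
      have h0 := congrArg (fun P => Polynomial.coeff P 0) h
      simpa using h0
    apply mul_left_cancel₀ hne
    rw [mul_zero]
    have hmap : ρp.map (Int.castRingHom (ZMod p))
        = ((1:Polynomial (ZMod p)) - Polynomial.X)^(q-1) - ∑ j ∈ range q, Polynomial.X^j := by
      rw [hρpdef, Polynomial.map_sub, Polynomial.map_pow, Polynomial.map_sub, Polynomial.map_one,
        Polynomial.map_X]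
      congr 1
      rw [Polynomial.map_sum]
      refine Finset.sum_congr rfl fun j _ => ?_
      rw [Polynomial.map_pow, Polynomial.map_X]
    rw [hmap, mul_sub]
    have h1 : ((1:Polynomial (ZMod p)) - Polynomial.X) * ((1:Polynomial (ZMod p)) - Polynomial.X)^(q-1)
        = ((1:Polynomial (ZMod p)) - Polynomial.X)^q := by
      rw [← pow_succ']
      congr 1
      omega
    have h2 : ((1:Polynomial (ZMod p)) - Polynomial.X)^q = 1 - Polynomial.X^q := by
      rw [hqdef, sub_pow_char_pow, one_pow]
    have h3 : ((1:Polynomial (ZMod p)) - Polynomial.X) * (∑ j ∈ range q, Polynomial.X^j)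
        = 1 - Polynomial.X^q := by
      have hg := geom_sum_mul (Polynomial.X : Polynomial (ZMod p)) q
      linear_combination -hg
    rw [h1, h2, h3, sub_self]
  have hρdvd : ∀ j, (p:ℤ) ∣ ρp.coeff j := by
    intro j
    have h1 := congrArg (fun P => Polynomial.coeff P j) hρmap
    simp only [Polynomial.coeff_map, Polynomial.coeff_zero] at h1
    exact (ZMod.intCast_zmod_eq_zero_iff_dvd _ p).mp (by simpa using h1)
  have hρdeg : ρp.natDegree ≤ q - 1 := by
    refine le_trans (Polynomial.natDegree_sub_le _ _) (max_le ?_ ?_)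
    · refine le_trans (Polynomial.natDegree_pow_le) ?_
      have h1 : ((1:Polynomial ℤ) - Polynomial.X).natDegree ≤ 1 := by
        refine le_trans (Polynomial.natDegree_sub_le _ _) ?_
        simp [Polynomial.natDegree_one, Polynomial.natDegree_X]
      calc (q-1) * ((1:Polynomial ℤ) - Polynomial.X).natDegree ≤ (q-1) * 1 :=
            Nat.mul_le_mul_left _ h1
        _ = q - 1 := by omega
    · refine Polynomial.natDegree_sum_le_of_forall_le _ _ fun j hj => ?_
      rw [Polynomial.natDegree_X_pow]
      have := Finset.mem_range.mp hj
      omega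
  -- series level
  have hρsupp : ∀ j, q ≤ j → coeff (R := ℤ) j ((ρp : Polynomial ℤ) : ℤ⟦X⟧) = 0 := by
    intro j hj
    rw [Polynomial.coeff_coe]
    exact Polynomial.coeff_eq_zero_of_natDegree_lt (by omega)
  obtain ⟨ρ₂, hρ₂, hρ₂s⟩ := exists_p_eq p ((ρp : Polynomial ℤ) : ℤ⟦X⟧)
    (fun j => by rw [Polynomial.coeff_coe]; exact hρdvd j)
  have hρ₂supp : ∀ j, q ≤ j → coeff (R := ℤ) j ρ₂ = 0 := fun j hj => hρ₂s j (hρsupp j hj)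
  have hρcoe : ((ρp : Polynomial ℤ) : ℤ⟦X⟧)
      = ((1:ℤ⟦X⟧) - X)^(q-1) - ∑ j ∈ range q, (X:ℤ⟦X⟧)^j := by
    rw [hρpdef, ← Polynomial.coeToPowerSeries.ringHom_apply, map_sub, map_pow, map_sub, map_one,
      map_sum]
    simp only [Polynomial.coeToPowerSeries.ringHom_apply, Polynomial.coe_X, map_pow]
  have hδ : ((1:ℤ⟦X⟧) - X)^q = (1 - X^q) + (1 - X) * ((ρp : Polynomial ℤ) : ℤ⟦X⟧) := by
    rw [hρcoe]
    have hg := geom_sum_mul (X : ℤ⟦X⟧) q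
    have hq' : ((1:ℤ⟦X⟧) - X)^q = (1 - X) * ((1:ℤ⟦X⟧) - X)^(q-1) := by
      rw [← pow_succ']
      congr 1
      omega
    rw [hq']
    linear_combination -hg
  -- binomial expansion
  have hbin : ((1:ℤ⟦X⟧) - X)^(u*q) = ∑ i ∈ range (u+1),
      ((1 - X) * ((ρp : Polynomial ℤ) : ℤ⟦X⟧))^i * ((1:ℤ⟦X⟧) - X^q)^(u-i) * (u.choose i : ℤ⟦X⟧) := by
    have h1 : ((1:ℤ⟦X⟧) - X)^(u*q) = (((1:ℤ⟦X⟧) - X)^q)^u := by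
      rw [mul_comm, pow_mul]
    rw [h1, hδ, add_comm ((1:ℤ⟦X⟧) - X^q) _, add_pow]
  have hser2 : (fM p M)^(p-1) * (1-X)^(u*q) - (fM p M)^(p-1)*((1:ℤ⟦X⟧)-X^q)^u
      = ∑ i ∈ range u, (fM p M)^(p-1) *
        (((1 - X) * ((ρp : Polynomial ℤ) : ℤ⟦X⟧))^(i+1) * ((1:ℤ⟦X⟧) - X^q)^(u-(i+1))
          * (u.choose (i+1) : ℤ⟦X⟧)) := by
    rw [hbin, Finset.mul_sum, Finset.sum_range_succ']
    simp only [pow_zero, one_mul, Nat.sub_zero, Nat.choose_zero_right, Nat.cast_one, mul_one]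
    ring
  -- each term vanishes mod p^2
  have hterm : ∀ j, 1 ≤ j → j ≤ u → ((coeff (R := ℤ) n ((fM p M)^(p-1) *
      (((1 - X) * ((ρp : Polynomial ℤ) : ℤ⟦X⟧))^j * ((1:ℤ⟦X⟧) - X^q)^(u-j)
        * (u.choose j : ℤ⟦X⟧))) : ℤ) : ZMod (p^2)) = 0 := by
    intro j hj1 hju
    rcases Nat.lt_or_ge j 2 with hj2 | hj2
    · -- j = 1
      have hj : j = 1 := by omega
      subst hj
      obtain ⟨W₂, hW₂, -⟩ := exists_p_eq p ((fM p M)^(p-1)*(1-X) - (1 - X^(p^M)))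
        (map_zero_dvd p _ (by
          rw [map_sub, mapV p M hp hM1, map_sub, map_one, map_pow, PowerSeries.map_X, sub_self]))
      have hVdec : (fM p M)^(p-1)*(1-X) = (1 - X^(p^M)) + (p:ℤ⟦X⟧) * W₂ := by
        linear_combination hW₂
      set ZZ : ℤ⟦X⟧ := (1 - X^(p^M)) * (ρ₂ * ((1:ℤ⟦X⟧) - X^q)^(u-1)) * (u.choose 1 : ℤ⟦X⟧)
        with hZZdef
      set YY : ℤ⟦X⟧ := W₂ * (ρ₂ * ((1:ℤ⟦X⟧) - X^q)^(u-1)) * (u.choose 1 : ℤ⟦X⟧) with hYYdef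
      have hT1 : (fM p M)^(p-1) *
          (((1 - X) * ((ρp : Polynomial ℤ) : ℤ⟦X⟧))^1 * ((1:ℤ⟦X⟧) - X^q)^(u-1)
            * (u.choose 1 : ℤ⟦X⟧))
          = (p:ℤ⟦X⟧) * ZZ + (p:ℤ⟦X⟧)^2 * YY := by
        rw [pow_one, hρ₂, hZZdef, hYYdef]
        have h9 : (fM p M)^(p-1) * ((1 - X) * ((p:ℤ⟦X⟧) * ρ₂) * ((1:ℤ⟦X⟧) - X^q)^(u-1)
            * (u.choose 1 : ℤ⟦X⟧))
            = ((fM p M)^(p-1) * (1-X)) * ((p:ℤ⟦X⟧) * ρ₂) * ((1:ℤ⟦X⟧) - X^q)^(u-1)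
              * (u.choose 1 : ℤ⟦X⟧) := by ring
        rw [h9, hVdec]
        ring
      -- coefficient of ZZ vanishes over ℤ
      have hEdeg : (((1:Polynomial ℤ) - Polynomial.X^q)^(u-1)).natDegree ≤ (u-1)*q := by
        refine le_trans (Polynomial.natDegree_pow_le) ?_
        have h1 : ((1:Polynomial ℤ) - Polynomial.X^q).natDegree ≤ q := by
          refine le_trans (Polynomial.natDegree_sub_le _ _) ?_
          simp [Polynomial.natDegree_one, Polynomial.natDegree_X_pow]
        exact Nat.mul_le_mul_left _ h1
      have hcoeffb : ∀ b', (u-1)*q < b' → coeff (R := ℤ) b' (((1:ℤ⟦X⟧) - X^q)^(u-1)) = 0 := by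
        intro b' hb
        rw [← coe_one_sub_pow, Polynomial.coeff_coe]
        exact Polynomial.coeff_eq_zero_of_natDegree_lt (lt_of_le_of_lt hEdeg hb)
      have hZ0 : coeff (R := ℤ) n (ρ₂ * ((1:ℤ⟦X⟧) - X^q)^(u-1)) = 0 := by
        rw [PowerSeries.coeff_mul]
        refine Finset.sum_eq_zero fun ab hab => ?_
        have hab2 := Finset.HasAntidiagonal.mem_antidiagonal.mp hab
        rcases Nat.lt_or_ge ab.1 q with ha | ha
        · have hb : (u-1)*q < ab.2 := by
            have h5 : (u-1)*q + q = u*q := by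
              have h6 : u - 1 + 1 = u := by omega
              calc (u-1)*q + q = ((u-1)+1)*q := by ring
              _ = u*q := by rw [h6]
            omega
          rw [hcoeffb ab.2 hb, mul_zero]
        · rw [hρ₂supp ab.1 ha, zero_mul]
      have hZZ : coeff (R := ℤ) n ZZ = 0 := by
        rw [hZZdef]
        have hsplit : (1 - X^(p^M)) * (ρ₂ * ((1:ℤ⟦X⟧) - X^q)^(u-1)) * (u.choose 1 : ℤ⟦X⟧)
            = (ρ₂ * ((1:ℤ⟦X⟧) - X^q)^(u-1)) * (u.choose 1 : ℤ⟦X⟧)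
              - X^(p^M) * ((ρ₂ * ((1:ℤ⟦X⟧) - X^q)^(u-1)) * (u.choose 1 : ℤ⟦X⟧)) := by ring
        rw [hsplit, map_sub]
        have hc1 : coeff (R := ℤ) n ((ρ₂ * ((1:ℤ⟦X⟧) - X^q)^(u-1)) * (u.choose 1 : ℤ⟦X⟧)) = 0 := by
          rw [show ((u.choose 1 : ℕ) : ℤ⟦X⟧) = PowerSeries.C (R := ℤ) ((u.choose 1 : ℕ) : ℤ)
            from (map_natCast (PowerSeries.C (R := ℤ)) _).symm, mul_comm, coeff_C_mul, hZ0, mul_zero]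
        have hc2 : coeff (R := ℤ) n (X^(p^M) * ((ρ₂ * ((1:ℤ⟦X⟧) - X^q)^(u-1)) * (u.choose 1 : ℤ⟦X⟧))) = 0 := by
          refine X_pow_dvd_iff.mp ((pow_dvd_pow (X:ℤ⟦X⟧) hnpM).mul_right _) n (Nat.lt_succ_self n)
        rw [hc1, hc2, sub_zero]
      -- conclude
      have hcast : ((coeff (R := ℤ) n ((p:ℤ⟦X⟧) * ZZ + (p:ℤ⟦X⟧)^2 * YY) : ℤ) : ZMod (p^2)) = 0 := by
        rw [map_add]
        have hz : coeff (R := ℤ) n ((p:ℤ⟦X⟧) * ZZ) = 0 := by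
          rw [show ((p:ℕ) : ℤ⟦X⟧) = PowerSeries.C (R := ℤ) ((p:ℕ) : ℤ)
            from (map_natCast (PowerSeries.C (R := ℤ)) _).symm, coeff_C_mul, hZZ, mul_zero]
        have hy : ((coeff (R := ℤ) n ((p:ℤ⟦X⟧)^2 * YY) : ℤ) : ZMod (p^2)) = 0 := by
          have h7 : (p:ℤ⟦X⟧)^2 = PowerSeries.C (R := ℤ) (((p^2:ℕ):ℤ)) := by
            rw [show ((p:ℕ) : ℤ⟦X⟧) = PowerSeries.C (R := ℤ) ((p:ℕ) : ℤ)
              from (map_natCast (PowerSeries.C (R := ℤ)) _).symm, ← map_pow]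
            push_cast
            ring_nf
          rw [h7, coeff_C_mul, Int.cast_mul]
          have h8 : (((p^2:ℕ):ℤ) : ZMod (p^2)) = 0 := by
            rw [Int.cast_natCast, ZMod.natCast_self]
          rw [h8, zero_mul]
        rw [hz, zero_add]
        exact hy
      rw [hT1]
      exact hcast
    · -- j ≥ 2
      have hT : (fM p M)^(p-1) *
          (((1 - X) * ((ρp : Polynomial ℤ) : ℤ⟦X⟧))^j * ((1:ℤ⟦X⟧) - X^q)^(u-j)
            * (u.choose j : ℤ⟦X⟧))
          = (p:ℤ⟦X⟧)^j * ((fM p M)^(p-1) * ((1-X)^j * ρ₂^j * ((1:ℤ⟦X⟧) - X^q)^(u-j)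
            * (u.choose j : ℤ⟦X⟧))) := by
        rw [hρ₂, mul_pow, mul_pow]
        ring
      rw [hT]
      have hcast2 : ((coeff (R := ℤ) n ((p:ℤ⟦X⟧)^j * ((fM p M)^(p-1) * ((1-X)^j * ρ₂^j
          * ((1:ℤ⟦X⟧) - X^q)^(u-j) * (u.choose j : ℤ⟦X⟧)))) : ℤ) : ZMod (p^2)) = 0 := by
        have h7 : ((p:ℕ):ℤ⟦X⟧)^j = PowerSeries.C (R := ℤ) (((p:ℕ):ℤ)^j) := by
          rw [show ((p:ℕ) : ℤ⟦X⟧) = PowerSeries.C (R := ℤ) ((p:ℕ) : ℤ)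
            from (map_natCast (PowerSeries.C (R := ℤ)) _).symm, ← map_pow]
        rw [h7, coeff_C_mul, Int.cast_mul]
        have h8 : ((((p:ℕ):ℤ)^j : ℤ) : ZMod (p^2)) = 0 := by
          rw [Int.cast_pow, Int.cast_natCast]
          have h9 : ((p:ZMod (p^2)))^j = ((p:ZMod (p^2)))^2 * ((p:ZMod (p^2)))^(j-2) := by
            rw [← pow_add]
            congr 1
            omega
          have h10 : ((p:ZMod (p^2)))^2 = 0 := by
            rw [← Nat.cast_pow, ZMod.natCast_self]
          rw [h9, h10, zero_mul]
        rw [h8, zero_mul]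
      exact hcast2
  have hco : coeff (R := ℤ) n ((fM p M)^(p-1) * (1-X)^(u*q))
      - coeff (R := ℤ) n ((fM p M)^(p-1)*((1:ℤ⟦X⟧)-X^q)^u)
      = ∑ i ∈ range u, coeff (R := ℤ) n ((fM p M)^(p-1) *
        (((1 - X) * ((ρp : Polynomial ℤ) : ℤ⟦X⟧))^(i+1) * ((1:ℤ⟦X⟧) - X^q)^(u-(i+1))
          * (u.choose (i+1) : ℤ⟦X⟧))) := by
    rw [← map_sub, hser2, map_sum]
  rw [Int.cast_sub] at *
  rw [← Int.cast_sub, hco, Int.cast_sum]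
  exact Finset.sum_eq_zero fun i hi => hterm (i+1) (by omega)
    (by have := Finset.mem_range.mp hi; omega)

lemma coeff_Cpoly (p : ℕ) (hp2 : 2 ≤ p) : ∀ s r, r < p^s →
    (∏ i ∈ range s, ((1:Polynomial ℤ) - Polynomial.X^(p^i))^(p-1)).coeff r
      = ∏ i ∈ range s, ((-1:ℤ)^(r / p^i % p) * ((p-1).choose (r / p^i % p) : ℤ)) := by
  intro s
  induction s with
  | zero =>
    intro r hr
    have h0 : r = 0 := by simpa using hr
    subst h0
    simp
  | succ s ih =>
    intro r hr
    have hsplit : (∏ i ∈ range (s+1), ((1:Polynomial ℤ) - Polynomial.X^(p^i))^(p-1))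
        = (∏ i ∈ range s, ((1:Polynomial ℤ) - Polynomial.X^(p^(i+1)))^(p-1))
          * ((1:Polynomial ℤ) - Polynomial.X^(p^0))^(p-1) := Finset.prod_range_succ' _ s
    have haev : (∏ i ∈ range s, ((1:Polynomial ℤ) - Polynomial.X^(p^(i+1)))^(p-1))
        = Polynomial.aeval ((Polynomial.X:Polynomial ℤ)^p)
            (∏ i ∈ range s, ((1:Polynomial ℤ) - Polynomial.X^(p^i))^(p-1)) := by
      rw [map_prod]
      refine Finset.prod_congr rfl fun i _ => ?_
      rw [map_pow, map_sub, map_one, map_pow, Polynomial.aeval_X, ← pow_mul]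
      congr 2
      rw [pow_succ']
    have hA0 : ((1:Polynomial ℤ) - Polynomial.X^(p^0))^(p-1)
        = ((1:Polynomial ℤ) - Polynomial.X)^(p-1) := by
      rw [pow_zero, pow_one]
    have hdeg : (((1:Polynomial ℤ) - Polynomial.X)^(p-1)).natDegree < p := by
      have h1 : ((1:Polynomial ℤ) - Polynomial.X).natDegree ≤ 1 := by
        refine le_trans (Polynomial.natDegree_sub_le _ _) ?_
        simp [Polynomial.natDegree_one, Polynomial.natDegree_X]
      have h2 := Polynomial.natDegree_pow_le
        (p := ((1:Polynomial ℤ) - Polynomial.X)) (n := p-1)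
      have h3 : (p-1) * ((1:Polynomial ℤ) - Polynomial.X).natDegree ≤ (p-1)*1 :=
        Nat.mul_le_mul_left _ h1
      omega
    rw [hsplit, haev, hA0, mul_comm, coeff_mul_aeval _ _ p r hdeg]
    have hrp : r / p < p^s := by
      rw [Nat.div_lt_iff_lt_mul (by omega : 0 < p)]
      calc r < p^(s+1) := hr
      _ = p^s * p := pow_succ p s
    rw [coeff_one_sub_X_pow, ih (r/p) hrp]
    have hRHS : ∏ i ∈ range (s+1), ((-1:ℤ)^(r / p^i % p) * ((p-1).choose (r / p^i % p) : ℤ))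
        = ((-1:ℤ)^(r / p^0 % p) * ((p-1).choose (r / p^0 % p) : ℤ))
          * ∏ i ∈ range s, ((-1:ℤ)^(r / p^(i+1) % p) * ((p-1).choose (r / p^(i+1) % p) : ℤ)) := by
      rw [Finset.prod_range_succ', mul_comm]
    rw [hRHS, pow_zero, Nat.div_one]
    congr 1
    refine Finset.prod_congr rfl fun i _ => ?_
    have hdd : r / p / p^i = r / p^(i+1) := by
      rw [Nat.div_div_eq_div_mul]
      congr 1
      rw [pow_succ']
    rw [hdd]

lemma lemD (p u s n : ℕ) (hp2 : 2 ≤ p) (hs : 1 ≤ s) (hu1 : 1 ≤ u) (hn : u * p^s < n) :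
    coeff (R := ℤ) n ((fM p (n+1+s))^(p-1) * ((1:ℤ⟦X⟧) - X^(p^s))^u)
      = (∏ i ∈ range s, (-1:ℤ)^(n / p^i % p) * ((p-1).choose (n / p^i % p) : ℤ))
        * ∑ i ∈ range (u+1), (-1:ℤ)^i * (u.choose i : ℤ) * Dp p (n / p^s - i) := by
  set q := p^s with hqdef
  have hq1 : 1 ≤ q := Nat.one_le_pow _ _ (by omega)
  set Cp : Polynomial ℤ := ∏ i ∈ range s, ((1:Polynomial ℤ) - Polynomial.X^(p^i))^(p-1)
    with hCpdef
  set Ep : Polynomial ℤ := ∏ j ∈ range (n+1), ((1:Polynomial ℤ) - Polynomial.X^(p^j))^(p-1)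
    with hEpdef
  set Dq : Polynomial ℤ := ((1:Polynomial ℤ) - Polynomial.X)^u * Ep with hDqdef
  have haev : Polynomial.aeval ((Polynomial.X:Polynomial ℤ)^q) Dq
      = ((1:Polynomial ℤ) - Polynomial.X^q)^u
        * ∏ j ∈ range (n+1), ((1:Polynomial ℤ) - Polynomial.X^(p^(s+j)))^(p-1) := by
    rw [hDqdef, map_mul]
    congr 1
    · rw [map_pow, map_sub, map_one, Polynomial.aeval_X]
    · rw [hEpdef, map_prod]
      refine Finset.prod_congr rfl fun j _ => ?_
      rw [map_pow, map_sub, map_one, map_pow, Polynomial.aeval_X, ← pow_mul]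
      congr 2
      rw [hqdef, ← pow_add]
  have hser : (fM p (n+1+s))^(p-1) * ((1:ℤ⟦X⟧) - X^q)^u
      = ((Cp * Polynomial.aeval ((Polynomial.X:Polynomial ℤ)^q) Dq : Polynomial ℤ) : ℤ⟦X⟧) := by
    rw [Polynomial.coe_mul, haev, Polynomial.coe_mul, coe_one_sub_pow, coe_prod_pow,
      coe_prod_pow]
    have hM : n+1+s = s+(n+1) := by omega
    rw [fM, hM, Finset.prod_range_add, mul_pow, ← Finset.prod_pow, ← Finset.prod_pow]
    ring
  have hCdeg : Cp.natDegree < q := by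
    have h1 : Cp.natDegree ≤ ∑ i ∈ range s, (((1:Polynomial ℤ) - Polynomial.X^(p^i))^(p-1)).natDegree :=
      Polynomial.natDegree_prod_le _ _
    have h2 : ∑ i ∈ range s, (((1:Polynomial ℤ) - Polynomial.X^(p^i))^(p-1)).natDegree
        ≤ ∑ i ∈ range s, (p-1)*p^i := by
      refine Finset.sum_le_sum fun i _ => ?_
      refine le_trans (Polynomial.natDegree_pow_le) ?_
      have h3 : ((1:Polynomial ℤ) - Polynomial.X^(p^i)).natDegree ≤ p^i := by
        refine le_trans (Polynomial.natDegree_sub_le _ _) ?_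
        simp [Polynomial.natDegree_one, Polynomial.natDegree_X_pow]
      exact Nat.mul_le_mul_left _ h3
    have h4 := geom_nat p (by omega) s
    omega
  have hmain : coeff (R := ℤ) n ((fM p (n+1+s))^(p-1) * ((1:ℤ⟦X⟧) - X^q)^u)
      = Cp.coeff (n % q) * Dq.coeff (n / q) := by
    rw [hser, Polynomial.coeff_coe, coeff_mul_aeval _ _ q n hCdeg]
  rw [hmain]
  congr 1
  · -- digits
    rw [hCpdef, coeff_Cpoly p hp2 s (n % q) (Nat.mod_lt _ (by positivity))]
    refine Finset.prod_congr rfl fun i hi => ?_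
    have his : i < s := Finset.mem_range.mp hi
    have h1 : q = p^i * p^(s-i) := by
      rw [hqdef, ← pow_add]
      congr 1
      omega
    have h2 : n % q / p^i = n / p^i % p^(s-i) := by
      rw [h1, Nat.mod_mul_right_div_self]
    rw [h2, Nat.mod_mod_of_dvd _ (dvd_pow_self p (by omega : s-i ≠ 0))]
  · -- D part
    set m := n / q with hmdef
    have hmu : u ≤ m := by
      rw [hmdef, Nat.le_div_iff_mul_le (by omega : 0 < q)]
      omega
    have hmn : m ≤ n := by
      rw [hmdef]
      exact Nat.div_le_self n q
    rw [hDqdef, Polynomial.coeff_mul, Finset.Nat.sum_antidiagonal_eq_sum_range_succ_mk]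
    have hsub : range (u+1) ⊆ range (m+1) := Finset.range_subset_range.mpr (by omega)
    have hzero : ∀ k ∈ range (m+1), k ∉ range (u+1) →
        (((1:Polynomial ℤ) - Polynomial.X)^u).coeff k * Ep.coeff (m-k) = 0 := by
      intro k hk1 hk2
      have hku : u < k := by
        have h8 := Finset.mem_range.mp hk1
        have h7 : ¬ (k < u+1) := fun hc => hk2 (Finset.mem_range.mpr hc)
        omega
      rw [coeff_one_sub_X_pow, Nat.choose_eq_zero_of_lt hku]
      norm_num
    rw [← Finset.sum_subset hsub hzero]
    · refine Finset.sum_congr rfl fun k hk => ?_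
      rw [coeff_one_sub_X_pow]
      have hEco : Ep.coeff (m - k) = Dp p (m - k) := by
        have h5 : ((Ep : Polynomial ℤ) : ℤ⟦X⟧)
            = ∏ j ∈ range (n+1), ((1:ℤ⟦X⟧) - X^(p^j))^(p-1) := by
          rw [hEpdef]; exact coe_prod_pow _ _ _
        have h6 : Ep.coeff (m-k) = coeff (R := ℤ) (m-k) ((Ep : Polynomial ℤ) : ℤ⟦X⟧) :=
          (Polynomial.coeff_coe _ _).symm
        rw [h6, h5, stab p (p-1) ((m-k)+1) (n+1) (m-k) hp2 (by omega)
          (Nat.lt_two_pow_self (n := _) |>.trans_le (Nat.pow_le_pow_right (by omega) (by omega)))]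
        rfl
      rw [hEco]

lemma lemE (p : ℕ) (hp : p.Prime) (hp3 : 3 ≤ p) (s n : ℕ) :
    ¬ ((p:ℤ) ∣ ∏ i ∈ range s, (-1:ℤ)^(n / p^i % p) * ((p-1).choose (n / p^i % p) : ℤ)) := by
  intro hdvd
  haveI : Fact p.Prime := ⟨hp⟩
  have h1 : ((∏ i ∈ range s, (-1:ℤ)^(n / p^i % p) * ((p-1).choose (n / p^i % p) : ℤ) : ℤ)
      : ZMod p) = 0 := (ZMod.intCast_zmod_eq_zero_iff_dvd _ p).mpr hdvd
  have h2 : ((∏ i ∈ range s, (-1:ℤ)^(n / p^i % p) * ((p-1).choose (n / p^i % p) : ℤ) : ℤ)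
      : ZMod p) = 1 := by
    rw [show ((∏ i ∈ range s, (-1:ℤ)^(n / p^i % p) * ((p-1).choose (n / p^i % p) : ℤ) : ℤ)
        : ZMod p) = (Int.castRingHom (ZMod p))
          (∏ i ∈ range s, (-1:ℤ)^(n / p^i % p) * ((p-1).choose (n / p^i % p) : ℤ)) from rfl,
      map_prod]
    refine Finset.prod_eq_one fun i _ => ?_
    rw [map_mul, map_pow, map_neg, map_one]
    have h3 : (Int.castRingHom (ZMod p)) (((p-1).choose (n / p^i % p) : ℤ))
        = (-1:ZMod p)^(n / p^i % p) :=
      choose_cast_eq p hp _ (Nat.mod_lt _ hp.pos)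
    rw [h3, ← pow_add, ← two_mul, pow_mul]
    norm_num
  rw [h1] at h2
  exact zero_ne_one h2

end Stmt15A

theorem stmt15 (p u s : ℕ) (hp : p.Prime) (hp3 : 3 ≤ p) (hu1 : 1 ≤ u) (hu2 : u ≤ p - 1)
    (hs : 1 ≤ s) (n : ℕ) (hn : u * p ^ s < n) :
    ¬ ((p : ℤ) ∣
        ∏ i ∈ Finset.range s, (-1 : ℤ) ^ (n / p ^ i % p) * ((p - 1).choose (n / p ^ i % p) : ℤ)) ∧
    (p : ℤ) ^ 2 ∣
      Acoef p ((p - 1) * (u * p ^ s - 1)) n -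
        (∏ i ∈ Finset.range s, (-1 : ℤ) ^ (n / p ^ i % p) * ((p - 1).choose (n / p ^ i % p) : ℤ)) *
          ∑ i ∈ Finset.range (u + 1), (-1 : ℤ) ^ i * (u.choose i : ℤ) * Dp p (n / p ^ s - i) := by
  constructor
  · exact Stmt15A.lemE p hp hp3 s n
  · have hp2 : 2 ≤ p := hp.two_le
    have ha : Acoef p ((p - 1) * (u * p^s - 1)) n
        = coeff (R := ℤ) n (∏ i ∈ Finset.range (n+1+s),
            (PowerSeries.invOfUnit ((1:ℤ⟦X⟧) - X^(p^i)) 1)^((p-1)*(u*p^s-1))) := by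
      unfold Acoef
      exact Stmt15A.lemA p ((p-1)*(u*p^s-1)) n s hp2
    have hd := Stmt15A.lemD p u s n hp2 hs hu1 hn
    have hb := Stmt15A.lemB p u s n hp hs hu1 hn
    have hc := Stmt15A.lemC p u s n hp hs hu1 hn
    have hzero : ((Acoef p ((p - 1) * (u * p^s - 1)) n -
        (∏ i ∈ Finset.range s, (-1 : ℤ) ^ (n / p^i % p) * ((p - 1).choose (n / p^i % p) : ℤ)) *
          ∑ i ∈ Finset.range (u + 1), (-1:ℤ)^i * (u.choose i : ℤ) * Dp p (n / p^s - i) : ℤ)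
        : ZMod (p^2)) = 0 := by
      rw [ha, ← hd]
      have hsplit : coeff (R := ℤ) n (∏ i ∈ Finset.range (n+1+s),
            (PowerSeries.invOfUnit ((1:ℤ⟦X⟧) - X^(p^i)) 1)^((p-1)*(u*p^s-1)))
          - coeff (R := ℤ) n ((Stmt15A.fM p (n+1+s))^(p-1) * ((1:ℤ⟦X⟧) - X^(p^s))^u)
          = (coeff (R := ℤ) n (∏ i ∈ Finset.range (n+1+s),
              (PowerSeries.invOfUnit ((1:ℤ⟦X⟧) - X^(p^i)) 1)^((p-1)*(u*p^s-1)))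
            - coeff (R := ℤ) n ((Stmt15A.fM p (n+1+s))^(p-1) * ((1:ℤ⟦X⟧) - X)^(u*p^s)))
            + (coeff (R := ℤ) n ((Stmt15A.fM p (n+1+s))^(p-1) * ((1:ℤ⟦X⟧) - X)^(u*p^s))
              - coeff (R := ℤ) n ((Stmt15A.fM p (n+1+s))^(p-1) * ((1:ℤ⟦X⟧) - X^(p^s))^u)) := by ring
      rw [hsplit, Int.cast_add, hb, hc, add_zero]
    have hdvd := (ZMod.intCast_zmod_eq_zero_iff_dvd _ (p^2)).mp hzero
    have hcast : ((p^2 : ℕ) : ℤ) = (p:ℤ)^2 := by push_cast; ring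
    rwa [hcast] at hdvd
end

section
/- Let p ≥ 3 be a prime, k ∈ ℕ₊ with p²(p−1) | k, and r ∈ {1,…,p−2}. Then there exist infinitely many n ∈ ℕ₊ such that ν_p( A_{p,k−r}(n) ) ≥ ν_p(k). -/
open PowerSeries Finset

/-!
Write `G d = (1 - X ^ d)⁻¹`, so that `G (p ^ (i + 1))` is the expansion `X ↦ X ^ p` of
`G (p ^ i)`. Splitting off the factor `i = 0`,
`∏ G (p ^ i) ^ (k - r) = (1 - X) ^ r * G 1 ^ k * ∏_{i ≥ 1} G (p ^ i) ^ (k - r)`.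
The coefficients of `G 1 ^ k` are `C(k - 1 + m, k - 1)`, and `m * C(k - 1 + m, k - 1)` is a multiple
of `k`; hence modulo `p ^ ν_p(k)` the series `G 1 ^ k` is supported on multiples of `p`, and so is the
last product. Multiplying by the polynomial `(1 - X) ^ r` of degree `r < n % p` cannot reach the
exponent `n`, so `p ^ ν_p(k) ∣ A_{p, k - r}(n)` whenever `n ≡ -1 (mod p)`.
-/

theorem Nat.pow_padicValNat_dvd_add_choose {p m : ℕ} (d : ℕ) (hp : p.Prime) (hm : ¬ p ∣ m) :
    p ^ padicValNat p (d + 1) ∣ (d + m).choose d := by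
  have hdvd : d + 1 ∣ (d + m).choose d * m := by
    have h := Nat.choose_succ_right_eq (d + m) d
    rw [Nat.add_sub_cancel_left] at h
    exact h ▸ dvd_mul_left _ _
  exact (Nat.Coprime.pow_left _ ((hp.coprime_iff_not_dvd).2 hm)).dvd_of_dvd_mul_right
    (pow_padicValNat_dvd.trans hdvd)

namespace PowerSeries

variable {R S : Type*} [CommRing R] [CommRing S]

theorem invOfUnit_one_sub_X_pow {d : ℕ} (hd : d ≠ 0) :
    invOfUnit (1 - X ^ d : R⟦X⟧) 1 = expand d hd (mk 1) := by
  have h : (1 - X ^ d : R⟦X⟧) * expand d hd (mk 1) = 1 := by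
    rw [← expand_X d hd, ← map_one (expand d hd), ← map_sub, ← map_mul, mul_comm,
      mk_one_mul_one_sub_eq_one, map_one]
  exact left_inv_eq_right_inv (invOfUnit_mul _ 1 (by simp [hd])) h

theorem map_invOfUnit_one_sub_X_pow (f : R →+* S) {d : ℕ} (hd : d ≠ 0) :
    map f (invOfUnit (1 - X ^ d : R⟦X⟧) 1) = invOfUnit (1 - X ^ d) 1 := by
  rw [invOfUnit_one_sub_X_pow hd, invOfUnit_one_sub_X_pow hd, map_expand]
  congr 1
  ext
  simp

theorem mem_range_expand_iff {p : ℕ} (hp : p ≠ 0) {f : R⟦X⟧} :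
    f ∈ (expand p hp).range ↔ ∀ m, ¬ p ∣ m → coeff m f = 0 := by
  constructor
  · rintro ⟨g, rfl⟩ m hm
    exact coeff_expand_of_not_dvd p hp g hm
  · intro hf
    refine ⟨mk fun j => coeff (p * j) f, ?_⟩
    ext m
    change coeff m (expand p hp _) = _
    rw [coeff_expand]
    split_ifs with hm
    · rw [coeff_mk, Nat.mul_div_cancel' hm]
    · exact (hf m hm).symm

theorem coeff_mul_expand_eq_zero {p n : ℕ} (hp : p ≠ 0) {φ : Polynomial R}
    (hφ : φ.natDegree < n % p) (g : R⟦X⟧) : coeff n ((φ : R⟦X⟧) * expand p hp g) = 0 := by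
  rw [coeff_mul]
  refine Finset.sum_eq_zero ?_
  rintro ⟨a, b⟩ hab
  rw [HasAntidiagonal.mem_antidiagonal] at hab
  by_cases ha : a ≤ φ.natDegree
  · have hb : ¬ p ∣ b := by
      rintro ⟨c, rfl⟩
      have : n % p = a % p := by rw [← hab, Nat.add_mul_mod_self_left]
      have := Nat.mod_le a p
      omega
    rw [coeff_expand_of_not_dvd p hp g hb, mul_zero]
  · rw [Polynomial.coeff_coe, Polynomial.coeff_eq_zero_of_natDegree_lt (by omega), zero_mul]

theorem mk_one_pow_mem_range_expand {p : ℕ} (hp : p.Prime) (k : ℕ)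
    (hR : (p ^ padicValNat p k : R) = 0) : (mk 1 : R⟦X⟧) ^ k ∈ (expand p hp.ne_zero).range := by
  rcases k with _ | d
  · rw [pow_zero]
    exact one_mem _
  rw [mk_one_pow_eq_mk_choose_add, mem_range_expand_iff]
  intro m hm
  obtain ⟨c, hc⟩ := Nat.pow_padicValNat_dvd_add_choose d hp hm
  rw [coeff_mk, hc]
  push_cast
  rw [hR, zero_mul]

theorem coeff_prod_invOfUnit_one_sub_X_pow_pow_eq_zero {p k r n : ℕ} (hp : p.Prime)
    (hR : (p ^ padicValNat p k : R) = 0) (hrk : r ≤ k) (hn : r < n % p) :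
    coeff n (∏ i ∈ range (n + 1), invOfUnit (1 - X ^ p ^ i : R⟦X⟧) 1 ^ (k - r)) = 0 := by
  have hG : (mk 1 : R⟦X⟧) ^ (k - r) = (1 - X) ^ r * mk 1 ^ k := calc
    (mk 1 : R⟦X⟧) ^ (k - r) = mk 1 ^ (k - r) * (mk 1 * (1 - X)) ^ r := by
      rw [mk_one_mul_one_sub_eq_one, one_pow, mul_one]
    _ = (1 - X) ^ r * mk 1 ^ k := by
      rw [mul_pow, ← mul_assoc, ← pow_add, mul_comm, Nat.sub_add_cancel hrk]
  have hexpand : ∀ i, invOfUnit (1 - X ^ p ^ (i + 1) : R⟦X⟧) 1 ∈ (expand p hp.ne_zero).range := by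
    intro i
    rw [pow_succ', invOfUnit_one_sub_X_pow (mul_ne_zero hp.ne_zero (pow_ne_zero i hp.ne_zero)),
      expand_mul p hp.ne_zero (p ^ i) (pow_ne_zero i hp.ne_zero)]
    exact AlgHom.mem_range_self _ _
  obtain ⟨g, hg⟩ := Subalgebra.mul_mem _ (mk_one_pow_mem_range_expand hp k hR)
    (Subalgebra.prod_mem _ (t := range n) fun i _ => Subalgebra.pow_mem _ (hexpand i) (k - r))
  have hφ : (((1 - Polynomial.X) ^ r : Polynomial R) : R⟦X⟧) = (1 - X) ^ r := by simp
  have hdeg : ((1 - Polynomial.X) ^ r : Polynomial R).natDegree < n % p := by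
    have : (1 - Polynomial.X : Polynomial R).natDegree ≤ 1 := by compute_degree
    have := Polynomial.natDegree_pow_le_of_le r this
    omega
  rw [prod_range_succ', pow_zero, invOfUnit_one_sub_X_pow one_ne_zero, expand_one_apply,
    hG, mul_comm, mul_assoc, ← hg, ← hφ]
  exact coeff_mul_expand_eq_zero hp.ne_zero hdeg g

end PowerSeries

theorem pow_padicValNat_dvd_Acoef {p k r n : ℕ} (hp : p.Prime) (hrk : r ≤ k) (hn : r < n % p) :
    (p : ℤ) ^ padicValNat p k ∣ Acoef p (k - r) n := by
  have : NeZero (p ^ padicValNat p k) := ⟨pow_ne_zero _ hp.ne_zero⟩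
  rw [← Nat.cast_pow, ← ZMod.intCast_zmod_eq_zero_iff_dvd, Acoef, ← eq_intCast (Int.castRingHom _),
    ← coeff_map, map_prod]
  simp only [map_pow, map_invOfUnit_one_sub_X_pow _ (pow_ne_zero _ hp.ne_zero)]
  exact coeff_prod_invOfUnit_one_sub_X_pow_pow_eq_zero hp (by rw [← Nat.cast_pow, ZMod.natCast_self])
    hrk hn

theorem stmt16_general (p k r : ℕ) (hp : p.Prime) (hk : 1 ≤ k)
    (hdvd : p ^ 2 * (p - 1) ∣ k) (hr2 : r ≤ p - 2) :
    {n : ℕ | 0 < n ∧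
      (padicValNat p k : ℕ∞) ≤ emultiplicity (p : ℤ) (Acoef p (k - r) n)}.Infinite := by
  have hp2 := hp.two_le
  have hrk : r ≤ k := calc
    r ≤ p - 1 := by omega
    _ ≤ p ^ 2 * (p - 1) := Nat.le_mul_of_pos_left _ (by positivity)
    _ ≤ k := Nat.le_of_dvd hk hdvd
  refine Set.infinite_of_injective_forall_mem (f := fun j => p * j + (p - 1))
    (fun a b hab => Nat.eq_of_mul_eq_mul_left hp.pos (by simpa using hab)) fun j => ⟨by omega, ?_⟩
  have hmod : (p * j + (p - 1)) % p = p - 1 := by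
    rw [Nat.mul_add_mod, Nat.mod_eq_of_lt (by omega)]
  exact le_emultiplicity_of_pow_dvd (pow_padicValNat_dvd_Acoef hp hrk (by omega))

theorem stmt16 (p k r : ℕ) (hp : p.Prime) (hp3 : 3 ≤ p) (hk : 1 ≤ k)
    (hdvd : p ^ 2 * (p - 1) ∣ k) (hr1 : 1 ≤ r) (hr2 : r ≤ p - 2) :
    {n : ℕ | 0 < n ∧
      (padicValNat p k : ℕ∞) ≤ emultiplicity (p : ℤ) (Acoef p (k - r) n)}.Infinite :=
  stmt16_general p k r hp hk hdvd hr2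
end
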